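/- arXiv:1707.04778 — 7 statements merged into one kernel-verified Lean document; each statement's English description precedes it below -/
import Mathlib

section
/- Let X be a separable complete metric space, Ω = C([0,∞) → X) the space of continuous paths with the compact-open topology, Ω_x = {w ∈ Ω : w(0) = x}, θ_s the shift (θ_s w)(t) = w(s+t), and w ⋈_s v the splicing of paths with w(s) = v(0). Suppose S : X → 2^Ω satisfies: (S1) S(x) is a nonempty compact subset of Ω_x for every x; (S2) for every closed K ⊆ Ω the set {x ∈ X : S(x) ∩ K ≠ ∅} is Borel in X; (S3) if w ∈ S(x) and s ≥ 0 then θ_s w ∈ S(w(s)); (S4) if w ∈ S(x) and v ∈ S(w(s)) then w ⋈_s v ∈ S(x). Then S has a Borel measurable selection 𝔲 : X → Ω (𝔲(·,x) ∈ S(x) for all x) with the semigroup property 𝔲(t₂, 𝔲(t₁, x)) = 𝔲(t₁ + t₂, x) for all t₁, t₂ ≥ 0 and all x ∈ X; moreover, for each t ≥ 0 the map U(t) : X → X, U(t)(x) = 𝔲(t,x), is Borel measurable. -/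
/-!
Krylov's selection argument. For `r > 0` and a bounded continuous `f`, the discounted integral
`J w = ∫₀^∞ e^{-r t} f (w t) dt` satisfies `J (w ⋈_s v) - J w = e^{-r s} (J v - J (θ_s w))`, so
replacing every `S x` by the set of minimizers of `J` on it preserves (S1)–(S4). Doing this
successively along an enumeration of all pairs `(r, f)` with `r ∈ {1, 2, …}` and `f` in a
countable separating family, the intersection of the resulting decreasing families is still
admissible, and by uniqueness of the Laplace transform each of its values is a singleton. The
single-valued selection so obtained inherits the flow property from (S3) and measurability
from (S2).
-/

open MeasureTheory Set
open scoped NNReal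

noncomputable section

/-- The space `Ω = C([0,∞) → X)` of continuous one-sided infinite paths in `X`,
with the compact-open topology (topology of uniform convergence on compacts). -/
abbrev IPath (X : Type*) [TopologicalSpace X] : Type _ := C(ℝ≥0, X)

variable {X : Type*} [TopologicalSpace X]

/-- The shift `θ_s : w(·) ↦ w(s + ·)`. -/
def shift (s : ℝ≥0) (w : IPath X) : IPath X :=
  w.comp ⟨fun t => s + t, by fun_prop⟩

/-- The splicing `w ⋈_s v` of two paths with `w s = v 0`:
`(w ⋈_s v)(t) = w(t)` for `t ≤ s` and `(w ⋈_s v)(t) = v(t - s)` for `t ≥ s`. -/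
def splice (s : ℝ≥0) (w v : IPath X) (h : w s = v 0) : IPath X :=
  ⟨fun t => if t ≤ s then w t else v (t - s), by
    refine Continuous.if_le w.continuous (v.continuous.comp ?_) continuous_id
      continuous_const ?_
    · exact continuous_id.sub continuous_const
    · intro t ht
      rw [ht, tsub_self]
      exact h⟩

/-- The Borel σ-algebra on the path space. -/
instance : MeasurableSpace (IPath X) := borel _
instance : BorelSpace (IPath X) := ⟨rfl⟩

open scoped BoundedContinuousFunction

@[simp]
lemma shift_apply (s : ℝ≥0) (w : IPath X) (t : ℝ≥0) : shift s w t = w (s + t) := rfl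

lemma splice_apply_of_le {s : ℝ≥0} {w v : IPath X} (h : w s = v 0) {t : ℝ≥0} (ht : t ≤ s) :
    splice s w v h t = w t :=
  if_pos ht

@[simp]
lemma shift_splice (s : ℝ≥0) (w v : IPath X) (h : w s = v 0) : shift s (splice s w v h) = v := by
  ext t
  change (if s + t ≤ s then w (s + t) else v (s + t - s)) = v t
  rcases eq_or_ne t 0 with rfl | ht
  · simp [h]
  · rw [if_neg (by simpa using ht), add_tsub_cancel_left]

lemma integral_Ioi_eq_integral_Ioi_zero_comp_add (g : ℝ → ℝ) (s : ℝ) :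
    ∫ t in Ioi s, g t = ∫ t in Ioi (0 : ℝ), g (t + s) := by
  rw [← (measurePreserving_add_right volume s).setIntegral_preimage_emb
    (MeasurableEquiv.addRight s).measurableEmbedding g (Ioi s)]
  congr 2
  ext t
  simp

section DiscountedIntegral

variable {M : Type*} [TopologicalSpace M] {r : ℝ}

def discountedIntegral (r : ℝ) (f : M →ᵇ ℝ) (w : IPath M) : ℝ :=
  ∫ t in Ioi (0 : ℝ), Real.exp (-r * t) * f (w t.toNNReal)

lemma continuous_discountedIntegrand (r : ℝ) (f : M →ᵇ ℝ) (w : IPath M) :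
    Continuous fun t : ℝ => Real.exp (-r * t) * f (w t.toNNReal) := by
  fun_prop

lemma norm_discountedIntegrand_le (f : M →ᵇ ℝ) (w : IPath M) (t : ℝ) :
    ‖Real.exp (-r * t) * f (w t.toNNReal)‖ ≤ ‖f‖ * Real.exp (-r * t) := by
  rw [norm_mul, Real.norm_of_nonneg (Real.exp_pos _).le, mul_comm]
  gcongr
  exact f.norm_coe_le_norm _

lemma integrableOn_discountedIntegrand (hr : 0 < r) (f : M →ᵇ ℝ) (w : IPath M) (a : ℝ) :
    IntegrableOn (fun t : ℝ => Real.exp (-r * t) * f (w t.toNNReal)) (Ioi a) :=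
  ((exp_neg_integrableOn_Ioi a hr).const_mul ‖f‖).mono'
    (continuous_discountedIntegrand r f w).aestronglyMeasurable
    (ae_of_all _ (norm_discountedIntegrand_le f w))

lemma discountedIntegral_eq_add_shift (hr : 0 < r) (f : M →ᵇ ℝ) (w : IPath M) (s : ℝ≥0) :
    discountedIntegral r f w = (∫ t in (0 : ℝ)..s, Real.exp (-r * t) * f (w t.toNNReal))
      + Real.exp (-r * s) * discountedIntegral r f (shift s w) := by
  rw [discountedIntegral, ← intervalIntegral.integral_interval_add_Ioi
    (integrableOn_discountedIntegrand hr f w 0) (integrableOn_discountedIntegrand hr f w s),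
    integral_Ioi_eq_integral_Ioi_zero_comp_add, discountedIntegral, ← integral_const_mul]
  congr 1
  refine setIntegral_congr_fun measurableSet_Ioi fun t ht => ?_
  have : (t + s).toNNReal = s + t.toNNReal := by
    rw [Real.toNNReal_add (le_of_lt ht) s.coe_nonneg, Real.toNNReal_coe, add_comm]
  rw [this, shift_apply, ← mul_assoc, ← Real.exp_add]
  ring_nf

lemma discountedIntegral_splice_sub (hr : 0 < r) (f : M →ᵇ ℝ) (w v : IPath M) (s : ℝ≥0)
    (h : w s = v 0) :
    discountedIntegral r f (splice s w v h) - discountedIntegral r f w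
      = Real.exp (-r * s) * (discountedIntegral r f v - discountedIntegral r f (shift s w)) := by
  have hprefix : ∫ t in (0 : ℝ)..s, Real.exp (-r * t) * f (splice s w v h t.toNNReal)
      = ∫ t in (0 : ℝ)..s, Real.exp (-r * t) * f (w t.toNNReal) := by
    refine intervalIntegral.integral_congr fun t ht => ?_
    rw [uIcc_of_le s.coe_nonneg] at ht
    rw [splice_apply_of_le h (Real.toNNReal_le_iff_le_coe.2 ht.2)]
  rw [discountedIntegral_eq_add_shift hr f (splice s w v h) s, shift_splice, hprefix,
    discountedIntegral_eq_add_shift hr f w s]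
  ring

lemma continuous_discountedIntegral {M : Type*} [PseudoMetricSpace M] (hr : 0 < r)
    (f : M →ᵇ ℝ) : Continuous (discountedIntegral r f) :=
  continuous_of_dominated (fun w => (continuous_discountedIntegrand r f w).aestronglyMeasurable)
    (fun w => ae_of_all _ (norm_discountedIntegrand_le f w))
    ((exp_neg_integrableOn_Ioi 0 hr).const_mul ‖f‖) (ae_of_all _ fun t => by fun_prop)

end DiscountedIntegral

section Moments

open Polynomial

lemma integral_eval_mul_eq_zero_of_forall_integral_pow_mul_eq_zero {G : ℝ → ℝ} {a b : ℝ}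
    (hG : ContinuousOn G (uIcc a b)) (h : ∀ n : ℕ, ∫ u in a..b, u ^ n * G u = 0) (p : ℝ[X]) :
    ∫ u in a..b, p.eval u * G u = 0 := by
  simp_rw [eval_eq_sum_range, Finset.sum_mul]
  rw [intervalIntegral.integral_finsetSum fun i _ =>
    ContinuousOn.intervalIntegrable (by fun_prop)]
  refine Finset.sum_eq_zero fun i _ => ?_
  simp_rw [mul_assoc, intervalIntegral.integral_const_mul, h, mul_zero]

lemma eqOn_zero_of_forall_integral_pow_mul_eq_zero {G : ℝ → ℝ} (hG : ContinuousOn G (Icc 0 1))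
    (h : ∀ n : ℕ, ∫ u in (0 : ℝ)..1, u ^ n * G u = 0) : EqOn G 0 (Icc 0 1) := by
  have hG' : ContinuousOn G (uIcc 0 1) := by rwa [uIcc_of_le zero_le_one]
  obtain ⟨B, hB⟩ := isCompact_Icc.exists_bound_of_continuousOn hG
  have hB0 : 0 ≤ B := (norm_nonneg _).trans (hB 0 ⟨le_rfl, zero_le_one⟩)
  -- `∫ G² = ∫ (G - p) G` is small for a polynomial `p` uniformly close to `G`.
  have hsmall : ∀ ε > 0, ∫ u in (0 : ℝ)..1, G u * G u ≤ ε * B := by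
    intro ε hε
    obtain ⟨p, hp⟩ := exists_polynomial_near_of_continuousOn 0 1 G hG ε hε
    have hsub : ∫ u in (0 : ℝ)..1, G u * G u = ∫ u in (0 : ℝ)..1, (G u - p.eval u) * G u := by
      simp_rw [sub_mul]
      rw [intervalIntegral.integral_sub (f := fun u => G u * G u) (g := fun u => p.eval u * G u)
        (hG'.mul hG').intervalIntegrable (ContinuousOn.intervalIntegrable (by fun_prop)),
        integral_eval_mul_eq_zero_of_forall_integral_pow_mul_eq_zero hG' h, sub_zero]
    calc ∫ u in (0 : ℝ)..1, G u * G u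
        ≤ ‖∫ u in (0 : ℝ)..1, (G u - p.eval u) * G u‖ := hsub ▸ Real.le_norm_self _
      _ ≤ ε * B * |1 - 0| := by
        refine intervalIntegral.norm_integral_le_of_norm_le_const fun u hu => ?_
        have hu : u ∈ Icc (0 : ℝ) 1 := Ioc_subset_Icc_self (by simpa using hu)
        rw [norm_mul, Real.norm_eq_abs, abs_sub_comm]
        exact mul_le_mul (hp u hu).le (hB u hu) (norm_nonneg _) hε.le
      _ = ε * B := by norm_num
  have hzero : ∫ u in (0 : ℝ)..1, G u * G u ≤ 0 := by
    refine le_of_forall_pos_le_add fun ε hε => ?_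
    calc ∫ u in (0 : ℝ)..1, G u * G u ≤ ε / (B + 1) * B := hsmall _ (by positivity)
      _ ≤ 0 + ε := by
        rw [zero_add, div_mul_eq_mul_div, div_le_iff₀ (by positivity)]
        nlinarith
  intro c hc
  by_contra hGc
  exact hzero.not_gt <| intervalIntegral.integral_pos zero_lt_one (hG.mul hG)
    (fun u _ => mul_self_nonneg _) ⟨c, hc, mul_self_pos.2 hGc⟩

end Moments

section Laplace

open Filter Topology

lemma continuous_mul_comp_neg_log {g : ℝ → ℝ} {C : ℝ} (hg : Continuous g)
    (hC : ∀ t, |g t| ≤ C) : Continuous fun u => u * g (-Real.log u) := by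
  refine continuous_iff_continuousAt.2 fun u => ?_
  rcases eq_or_ne u 0 with rfl | hu
  · have hlim : Tendsto (fun u : ℝ => C * |u|) (𝓝 0) (𝓝 0) := by
      have hcont : Continuous fun u : ℝ => C * |u| := by fun_prop
      simpa using hcont.tendsto 0
    refine (squeeze_zero_norm (fun u => ?_) hlim).trans (by simp)
    rw [norm_mul, Real.norm_eq_abs, Real.norm_eq_abs, mul_comm]
    exact mul_le_mul_of_nonneg_right (hC _) (abs_nonneg u)
  · exact continuousAt_id.mul (hg.continuousAt.comp (Real.continuousAt_log hu).neg)

lemma image_exp_neg_Ioi_zero : (fun t : ℝ => Real.exp (-t)) '' Ioi 0 = Ioo 0 1 := by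
  ext u
  constructor
  · rintro ⟨t, ht, rfl⟩
    exact ⟨Real.exp_pos _, Real.exp_lt_one_iff.2 (neg_lt_zero.2 ht)⟩
  · rintro ⟨hu0, hu1⟩
    exact ⟨-Real.log u, neg_pos.2 (Real.log_neg hu0 hu1), by simp [Real.exp_log hu0]⟩

lemma integral_pow_mul_eq_integral_exp_mul (g : ℝ → ℝ) (n : ℕ) :
    ∫ u in (0 : ℝ)..1, u ^ n * (u * g (-Real.log u))
      = ∫ t in Ioi 0, Real.exp (-(n + 2 : ℕ) * t) * g t := by
  have hderiv : ∀ t ∈ Ioi (0 : ℝ),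
      HasDerivWithinAt (fun t : ℝ => Real.exp (-t)) (-Real.exp (-t)) (Ioi 0) t := fun t _ => by
    simpa using (hasDerivAt_neg t).exp.hasDerivWithinAt
  have hinj : InjOn (fun t : ℝ => Real.exp (-t)) (Ioi 0) :=
    (Real.exp_injective.comp neg_injective).injOn
  rw [intervalIntegral.integral_of_le zero_le_one, integral_Ioc_eq_integral_Ioo,
    ← image_exp_neg_Ioi_zero, integral_image_eq_integral_abs_deriv_smul measurableSet_Ioi
      hderiv hinj]
  refine setIntegral_congr_fun measurableSet_Ioi fun t _ => ?_
  simp only [smul_eq_mul, abs_neg, abs_of_pos (Real.exp_pos _), Real.log_exp, neg_neg,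
    ← Real.exp_nat_mul, ← mul_assoc, ← Real.exp_add]
  congr 2
  push_cast
  ring

/-- Lerch's theorem, for the exponents `1, 2, 3, …`. -/
lemma eqOn_zero_of_forall_integral_exp_mul_eq_zero {g : ℝ → ℝ} {C : ℝ} (hg : Continuous g)
    (hC : ∀ t, |g t| ≤ C) (h : ∀ n : ℕ, ∫ t in Ioi 0, Real.exp (-(n + 1 : ℕ) * t) * g t = 0) :
    EqOn g 0 (Ici 0) := by
  have hG := eqOn_zero_of_forall_integral_pow_mul_eq_zero
    (continuous_mul_comp_neg_log hg hC).continuousOn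
    fun n => (integral_pow_mul_eq_integral_exp_mul g n).trans (h (n + 1))
  intro t ht
  have hu : Real.exp (-t) ∈ Icc (0 : ℝ) 1 :=
    ⟨(Real.exp_pos _).le, Real.exp_le_one_iff.2 (neg_nonpos.2 ht)⟩
  simpa [(Real.exp_pos _).ne'] using hG hu

end Laplace

lemma exists_seq_boundedContinuous_separating (M : Type*) [MetricSpace M]
    [TopologicalSpace.SeparableSpace M] :
    ∃ f : ℕ → M →ᵇ ℝ, ∀ x y, (∀ k, f k x = f k y) → x = y := by
  open Metric.PiNatEmbed in
  refine ⟨fun k => .mkOfBound ⟨fun x => (distDenseSeq M k x : ℝ),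
    continuous_subtype_val.comp (continuous_distDenseSeq k)⟩ 1
    fun x y => Real.dist_le_of_mem_Icc_01 (distDenseSeq M k x).2 (distDenseSeq M k y).2, ?_⟩
  intro x y hxy
  by_contra hne
  obtain ⟨k, hk⟩ := injective_distDenseSeq x y hne
  exact hk (Subtype.ext (hxy k))

lemma eq_of_forall_discountedIntegral_eq {M : Type*} [TopologicalSpace M] {f : ℕ → M →ᵇ ℝ}
    (hf : ∀ x y, (∀ k, f k x = f k y) → x = y) {w v : IPath M}
    (h : ∀ n k : ℕ, discountedIntegral (n + 1 : ℕ) (f k) w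
      = discountedIntegral (n + 1 : ℕ) (f k) v) : w = v := by
  ext t
  refine hf _ _ fun k => ?_
  set g : ℝ → ℝ := fun s => f k (w s.toNNReal) - f k (v s.toNNReal)
  have hg : Continuous g := by fun_prop
  have hC : ∀ s, |g s| ≤ 2 * ‖f k‖ := fun s => by
    rw [← Real.dist_eq]
    exact (f k).dist_le_two_norm _ _
  have hzero := eqOn_zero_of_forall_integral_exp_mul_eq_zero hg hC fun n => by
    have hr : (0 : ℝ) < (n + 1 : ℕ) := by positivity
    simp_rw [g, mul_sub]
    rw [integral_sub (integrableOn_discountedIntegrand hr _ w 0)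
      (integrableOn_discountedIntegrand hr _ v 0)]
    exact sub_eq_zero.2 (h n k)
  simpa [g, sub_eq_zero] using hzero t.coe_nonneg

section Minimizers

variable {α β : Type*} {φ : β → ℝ} {s K : Set β}

def minimizers (φ : β → ℝ) (s : Set β) : Set β :=
  {w ∈ s | ∀ v ∈ s, φ w ≤ φ v}

lemma minimizers_subset : minimizers φ s ⊆ s := fun _ hw => hw.1

def iterMinimizers (T : α → Set β) (φ : ℕ → β → ℝ) : ℕ → α → Set β
  | 0 => T
  | n + 1 => fun x => minimizers (φ n) (iterMinimizers T φ n x)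

variable [TopologicalSpace β]

lemma nonempty_minimizers (hs : IsCompact s) (hne : s.Nonempty) (hφ : Continuous φ) :
    (minimizers φ s).Nonempty :=
  let ⟨w, hw, hmin⟩ := hs.exists_isMinOn hne hφ.continuousOn
  ⟨w, hw, fun _ hv => hmin hv⟩

lemma isCompact_minimizers (hs : IsCompact s) (hφ : Continuous φ) :
    IsCompact (minimizers φ s) := by
  have : minimizers φ s = s ∩ ⋂ v ∈ s, {w | φ w ≤ φ v} := by
    ext w
    simp [minimizers]
  rw [this]
  exact hs.inter_right (isClosed_biInter fun v _ => isClosed_le hφ continuous_const)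

lemma minimizers_inter_nonempty_iff (hs : IsCompact s) (hne : s.Nonempty) (hK : IsClosed K)
    (hφ : Continuous φ) :
    (minimizers φ s ∩ K).Nonempty ↔
      ∀ q : ℚ, (∃ v ∈ s, φ v < q) → (s ∩ (K ∩ φ ⁻¹' Iic q)).Nonempty := by
  constructor
  · rintro ⟨w, ⟨hws, hwmin⟩, hwK⟩ q ⟨v, hvs, hvq⟩
    exact ⟨w, hws, hwK, (hwmin v hvs).trans hvq.le⟩
  · intro h
    obtain ⟨v₀, hv₀⟩ := hne
    obtain ⟨q₀, hq₀⟩ := exists_rat_gt (φ v₀)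
    obtain ⟨w, hwsK, hwmin⟩ := (hs.inter_right hK).exists_isMinOn
      ((h q₀ ⟨v₀, hv₀, hq₀⟩).mono (inter_subset_inter_right _ inter_subset_left))
      hφ.continuousOn
    refine ⟨w, ⟨hwsK.1, fun v hvs => ?_⟩, hwsK.2⟩
    by_contra! hlt
    obtain ⟨q, hvq, hqw⟩ := exists_rat_btwn hlt
    obtain ⟨u, hus, huK, huq⟩ := h q ⟨v, hvs, hvq⟩
    exact (hwmin ⟨hus, huK⟩).not_gt (lt_of_le_of_lt huq hqw)

variable [MeasurableSpace α] {T : α → Set β}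

lemma measurableSet_minimizers_inter_nonempty
    (hT : ∀ K, IsClosed K → MeasurableSet {x | (T x ∩ K).Nonempty}) (hne : ∀ x, (T x).Nonempty)
    (hcpt : ∀ x, IsCompact (T x)) (hφ : Continuous φ) (hK : IsClosed K) :
    MeasurableSet {x | (minimizers φ (T x) ∩ K).Nonempty} := by
  have hIic : ∀ q : ℝ, IsClosed (φ ⁻¹' Iic q) := fun q => isClosed_Iic.preimage hφ
  have hlt : ∀ q : ℚ, {x | ∃ v ∈ T x, φ v < q}
      = ⋃ (q' : ℚ) (_ : q' < q), {x | (T x ∩ φ ⁻¹' Iic q').Nonempty} := by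
    intro q
    ext x
    simp only [mem_ofPred_eq, mem_iUnion, exists_prop]
    constructor
    · rintro ⟨v, hv, hvq⟩
      obtain ⟨q', hvq', hq'q⟩ := exists_rat_btwn hvq
      exact ⟨q', by exact_mod_cast hq'q, v, hv, hvq'.le⟩
    · rintro ⟨q', hq'q, v, hv, hvq'⟩
      exact ⟨v, hv, lt_of_le_of_lt hvq' (by exact_mod_cast hq'q)⟩
  have : {x | (minimizers φ (T x) ∩ K).Nonempty}
      = ⋂ q : ℚ, {x | ∃ v ∈ T x, φ v < q}ᶜ ∪ {x | (T x ∩ (K ∩ φ ⁻¹' Iic q)).Nonempty} := by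
    ext x
    simp only [mem_ofPred_eq, mem_iInter, mem_union, mem_compl_iff, ← imp_iff_not_or]
    exact minimizers_inter_nonempty_iff (hcpt x) (hne x) hK hφ
  rw [this]
  refine .iInter fun q => .union (.compl ?_) (hT _ (hK.inter (hIic q)))
  rw [hlt]
  exact .iUnion fun q' => .iUnion fun _ => hT _ (hIic q')

end Minimizers

lemma iInter_inter_nonempty_iff_of_isCompact {β : Type*} [TopologicalSpace β] [T2Space β]
    {t : ℕ → Set β} (ht : ∀ n, IsCompact (t n)) (hanti : ∀ n, t (n + 1) ⊆ t n) {K : Set β}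
    (hK : IsClosed K) : ((⋂ n, t n) ∩ K).Nonempty ↔ ∀ n, (t n ∩ K).Nonempty := by
  refine ⟨fun ⟨w, hw, hwK⟩ n => ⟨w, mem_iInter.1 hw n, hwK⟩, fun h => ?_⟩
  rw [iInter_inter]
  exact IsCompact.nonempty_iInter_of_sequence_nonempty_isCompact_isClosed _
    (fun n => inter_subset_inter_left K (hanti n)) h ((ht 0).inter_right hK)
    fun n => ((ht n).inter_right hK).isClosed

section Admissible

variable {M : Type*} [TopologicalSpace M] [MeasurableSpace M]

/-- The hypotheses (S1)–(S4) on a multifunction `S : M → 2^Ω`. -/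
structure IsAdmissible (S : M → Set (IPath M)) : Prop where
  nonempty : ∀ x, (S x).Nonempty
  isCompact : ∀ x, IsCompact (S x)
  apply_zero : ∀ x, ∀ w ∈ S x, w 0 = x
  measurableSet_inter_nonempty :
    ∀ K : Set (IPath M), IsClosed K → MeasurableSet {x | (S x ∩ K).Nonempty}
  shift_mem : ∀ x, ∀ w ∈ S x, ∀ s : ℝ≥0, shift s w ∈ S (w s)
  splice_mem : ∀ x, ∀ w ∈ S x, ∀ s : ℝ≥0, ∀ v ∈ S (w s), ∀ h : w s = v 0, splice s w v h ∈ S x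

lemma IsAdmissible.iInter [T2Space M] {S : ℕ → M → Set (IPath M)}
    (hS : ∀ n, IsAdmissible (S n)) (hanti : ∀ n x, S (n + 1) x ⊆ S n x) :
    IsAdmissible fun x => ⋂ n, S n x where
  nonempty x := by
    simpa using (iInter_inter_nonempty_iff_of_isCompact (fun n => (hS n).isCompact x)
      (fun n => hanti n x) isClosed_univ).2 fun n => by simpa using (hS n).nonempty x
  isCompact x := ((hS 0).isCompact x).of_isClosed_subset
    (isClosed_iInter fun n => ((hS n).isCompact x).isClosed) (iInter_subset _ 0)
  apply_zero x w hw := (hS 0).apply_zero x w (mem_iInter.1 hw 0)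
  measurableSet_inter_nonempty K hK := by
    have hiff x := iInter_inter_nonempty_iff_of_isCompact (fun n => (hS n).isCompact x)
      (fun n => hanti n x) hK
    simp_rw [hiff, ofPred_forall]
    exact .iInter fun n => (hS n).measurableSet_inter_nonempty K hK
  shift_mem x w hw s := mem_iInter.2 fun n => (hS n).shift_mem x w (mem_iInter.1 hw n) s
  splice_mem x w hw s v hv h :=
    mem_iInter.2 fun n => (hS n).splice_mem x w (mem_iInter.1 hw n) s v (mem_iInter.1 hv n) h

lemma IsAdmissible.exists_selection [OpensMeasurableSpace M] {S : M → Set (IPath M)}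
    (hS : IsAdmissible S) (hsub : ∀ x, (S x).Subsingleton) :
    ∃ u : M → IPath M, Measurable u ∧ (∀ x, u x ∈ S x) ∧
      ∀ x, ∀ t₁ t₂ : ℝ≥0, u (u x t₁) t₂ = u x (t₁ + t₂) := by
  choose u hu using hS.nonempty
  have hpre : ∀ K, u ⁻¹' K = {x | (S x ∩ K).Nonempty} := fun K => by
    ext x
    exact ⟨fun hx => ⟨u x, hu x, hx⟩,
      fun ⟨w, hw, hwK⟩ => mem_preimage.2 (hsub x hw (hu x) ▸ hwK)⟩
  refine ⟨u, measurable_of_isClosed fun K hK => ?_, hu, fun x t₁ t₂ => ?_⟩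
  · rw [hpre]
    exact hS.measurableSet_inter_nonempty K hK
  · rw [← hsub _ (hS.shift_mem x _ (hu x) t₁) (hu _)]
    rfl

end Admissible

lemma IsAdmissible.minimizers_discountedIntegral {M : Type*} [PseudoMetricSpace M]
    [MeasurableSpace M] {S : M → Set (IPath M)} (hS : IsAdmissible S) {r : ℝ} (hr : 0 < r)
    (f : M →ᵇ ℝ) : IsAdmissible fun x => minimizers (discountedIntegral r f) (S x) where
  nonempty x := nonempty_minimizers (hS.isCompact x) (hS.nonempty x)
    (continuous_discountedIntegral hr f)
  isCompact x := isCompact_minimizers (hS.isCompact x) (continuous_discountedIntegral hr f)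
  apply_zero x w hw := hS.apply_zero x w hw.1
  measurableSet_inter_nonempty _ hK := measurableSet_minimizers_inter_nonempty
    hS.measurableSet_inter_nonempty hS.nonempty hS.isCompact (continuous_discountedIntegral hr f)
    hK
  shift_mem := by
    rintro x w ⟨hwS, hwmin⟩ s
    refine ⟨hS.shift_mem x w hwS s, fun v hv => ?_⟩
    have h := (hS.apply_zero _ v hv).symm
    have hle := sub_nonneg.2 (hwmin _ (hS.splice_mem x w hwS s v hv h))
    rw [discountedIntegral_splice_sub hr f w v s h] at hle
    exact sub_nonneg.1 ((mul_nonneg_iff_of_pos_left (Real.exp_pos _)).1 hle)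
  splice_mem := by
    rintro x w ⟨hwS, hwmin⟩ s v ⟨hvS, hvmin⟩ h
    refine ⟨hS.splice_mem x w hwS s v hvS h, fun u hu => ?_⟩
    have hle : discountedIntegral r f (splice s w v h) - discountedIntegral r f w ≤ 0 := by
      rw [discountedIntegral_splice_sub hr f w v s h]
      exact mul_nonpos_of_nonneg_of_nonpos (Real.exp_pos _).le
        (sub_nonpos.2 (hvmin _ (hS.shift_mem x w hwS s)))
    linarith [hwmin u hu]

lemma IsAdmissible.exists_subsingleton {M : Type*} [MetricSpace M]
    [TopologicalSpace.SeparableSpace M] [MeasurableSpace M] {S : M → Set (IPath M)}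
    (hS : IsAdmissible S) :
    ∃ S' : M → Set (IPath M), IsAdmissible S' ∧ (∀ x, S' x ⊆ S x) ∧ ∀ x, (S' x).Subsingleton := by
  obtain ⟨f, hf⟩ := exists_seq_boundedContinuous_separating M
  set φ : ℕ → IPath M → ℝ :=
    fun m => discountedIntegral ((m.unpair.1 + 1 : ℕ) : ℝ) (f m.unpair.2)
  set T := iterMinimizers S φ
  have hT : ∀ n, IsAdmissible (T n) := by
    intro n
    induction n with
    | zero => exact hS
    | succ n ih => exact ih.minimizers_discountedIntegral (by positivity) _
  refine ⟨_, IsAdmissible.iInter hT fun n x => minimizers_subset, fun x => iInter_subset _ 0,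
    fun x w hw v hv => eq_of_forall_discountedIntegral_eq hf fun n k => ?_⟩
  have hw' := mem_iInter.1 hw (Nat.pair n k + 1)
  have hv' := mem_iInter.1 hv (Nat.pair n k + 1)
  simpa [φ] using le_antisymm (hw'.2 v hv'.1) (hv'.2 w hw'.1)

theorem semiflow_selection_general
    {X : Type*} [MetricSpace X] [SecondCountableTopology X]
    [MeasurableSpace X] [BorelSpace X]
    (S : X → Set (IPath X))
    (hS1a : ∀ x, (S x).Nonempty)
    (hS1b : ∀ x, IsCompact (S x))
    (hS1c : ∀ x, ∀ w ∈ S x, w 0 = x)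
    (hS2 : ∀ K : Set (IPath X), IsClosed K → MeasurableSet {x | (S x ∩ K).Nonempty})
    (hS3 : ∀ x, ∀ w ∈ S x, ∀ s : ℝ≥0, shift s w ∈ S (w s))
    (hS4 : ∀ x, ∀ w ∈ S x, ∀ s : ℝ≥0, ∀ v, ∀ hv : v ∈ S (w s),
      splice s w v ((hS1c _ v hv).symm) ∈ S x) :
    ∃ u : X → IPath X, Measurable u ∧ (∀ x, u x ∈ S x) ∧
      (∀ x, ∀ t₁ t₂ : ℝ≥0, u (u x t₁) t₂ = u x (t₁ + t₂)) ∧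
      ∀ t : ℝ≥0, Measurable fun x => u x t := by
  have hS : IsAdmissible S :=
    ⟨hS1a, hS1b, hS1c, hS2, hS3, fun x w hw s v hv _ => hS4 x w hw s v hv⟩
  obtain ⟨S', hS', hS'S, hS'sub⟩ := hS.exists_subsingleton
  obtain ⟨u, hu, huS', hflow⟩ := hS'.exists_selection hS'sub
  exact ⟨u, hu, fun x => hS'S x (huS' x), hflow,
    fun t => (continuous_eval_const t).measurable.comp hu⟩

/-- **Semiflow selection theorem.**  If `X` is a separable complete metric space and
`S : X → 2^Ω` has nonempty compact values `S x ⊆ Ω_x` (S1), is measurable (S2), is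
compatible with the shifts (S3), and is stable under splicing (S4), then `S` admits a
Borel measurable selection `𝔲` with the semigroup property
`𝔲(t₂, 𝔲(t₁, x)) = 𝔲(t₁ + t₂, x)`; moreover each time-`t` map `U(t) : X → X` is Borel
measurable. -/
theorem semiflow_selection
    {X : Type*} [MetricSpace X] [CompleteSpace X] [SecondCountableTopology X]
    [MeasurableSpace X] [BorelSpace X]
    (S : X → Set (IPath X))
    (hS1a : ∀ x, (S x).Nonempty)
    (hS1b : ∀ x, IsCompact (S x))
    (hS1c : ∀ x, ∀ w ∈ S x, w 0 = x)
    (hS2 : ∀ K : Set (IPath X), IsClosed K → MeasurableSet {x | (S x ∩ K).Nonempty})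
    (hS3 : ∀ x, ∀ w ∈ S x, ∀ s : ℝ≥0, shift s w ∈ S (w s))
    (hS4 : ∀ x, ∀ w ∈ S x, ∀ s : ℝ≥0, ∀ v, ∀ hv : v ∈ S (w s),
      splice s w v ((hS1c _ v hv).symm) ∈ S x) :
    ∃ u : X → IPath X, Measurable u ∧ (∀ x, u x ∈ S x) ∧
      (∀ x, ∀ t₁ t₂ : ℝ≥0, u (u x t₁) t₂ = u x (t₁ + t₂)) ∧
      ∀ t : ℝ≥0, Measurable fun x => u x t :=
  semiflow_selection_general S hS1a hS1b hS1c hS2 hS3 hS4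
end
end

section
/- Let X be a separable complete metric space, Ω = C([0,∞) → X) with the compact-open topology, θ_s the shift, and w ⋈_s v the splicing of paths. Suppose S : X → 2^Ω satisfies: (S3) if w ∈ S(x) and s ≥ 0 then θ_s w ∈ S(w(s)); (S4) if w ∈ S(x) and v ∈ S(w(s)) then w ⋈_s v ∈ S(x). Fix λ > 0 and a bounded continuous φ : X → ℝ, and define ζ(w) = ∫₀^∞ e^{−λt} φ(w(t)) dt. If w ∈ S(x) maximizes ζ over S(x), then for every s ≥ 0 the shifted path θ_s w maximizes ζ over S(w(s)). -/
open MeasureTheory Set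
open scoped NNReal

noncomputable section

variable {X : Type*} [TopologicalSpace X]

/-- The functional `ζ(w) = ∫₀^∞ e^{-λ t} φ(w(t)) dt`. -/
def zeta (lam : ℝ) (phi : X → ℝ) (w : IPath X) : ℝ :=
  ∫ t in Ioi (0 : ℝ), Real.exp (-lam * t) * phi (w (Real.toNNReal t))

lemma integrable_aux (lam : ℝ) (hlam : 0 < lam) (phi : X → ℝ) (hphic : Continuous phi)
    {M : ℝ} (hM : ∀ y, |phi y| ≤ M) (u : IPath X) (a : ℝ) :
    IntegrableOn (fun t => Real.exp (-lam * t) * phi (u (Real.toNNReal t))) (Ioi a) := by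
  refine Integrable.mono' ((exp_neg_integrableOn_Ioi a hlam).const_mul M) ?_ ?_
  · exact (((Real.continuous_exp.comp (continuous_const.mul continuous_id)).mul
      (hphic.comp (u.continuous.comp continuous_real_toNNReal))).aestronglyMeasurable).restrict
  · filter_upwards with t
    rw [Real.norm_eq_abs, abs_mul, abs_of_pos (Real.exp_pos _), mul_comm M]
    exact mul_le_mul_of_nonneg_left (hM _) (Real.exp_pos _).le

lemma shift_Ioi (f : ℝ → ℝ) (s : ℝ) :
    ∫ t in Ioi s, f t = ∫ t in Ioi (0 : ℝ), f (t + s) := by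
  rw [← integral_indicator measurableSet_Ioi, ← integral_indicator measurableSet_Ioi,
    ← integral_add_right_eq_self (fun t => (Ioi s).indicator f t) s]
  congr 1
  ext t
  by_cases h : 0 < t <;> simp [indicator, mem_Ioi, h, lt_add_iff_pos_left]

lemma zeta_splice (lam : ℝ) (hlam : 0 < lam) (phi : X → ℝ) (hphic : Continuous phi)
    {M : ℝ} (hM : ∀ y, |phi y| ≤ M) (s : ℝ≥0) (w v : IPath X) (h : w s = v 0) :
    zeta lam phi (splice s w v h) =
      (∫ t in Ioc (0 : ℝ) s, Real.exp (-lam * t) * phi (w (Real.toNNReal t))) +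
        Real.exp (-lam * s) * zeta lam phi v := by
  have hint := integrable_aux lam hlam phi hphic hM (splice s w v h) 0
  show (∫ t in Ioi (0:ℝ), Real.exp (-lam * t) * phi ((splice s w v h) (Real.toNNReal t)))
      = _ + Real.exp (-lam * ↑s) *
        ∫ t in Ioi (0:ℝ), Real.exp (-lam * t) * phi (v (Real.toNNReal t))
  rw [← Ioc_union_Ioi_eq_Ioi (s.coe_nonneg : (0:ℝ) ≤ s)] at hint
  have hsplit : (∫ t in Ioi (0:ℝ), Real.exp (-lam * t) * phi ((splice s w v h) (Real.toNNReal t)))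
      = (∫ t in Ioc (0:ℝ) s, Real.exp (-lam * t) * phi ((splice s w v h) (Real.toNNReal t)))
        + ∫ t in Ioi (s:ℝ), Real.exp (-lam * t) * phi ((splice s w v h) (Real.toNNReal t)) := by
    rw [← Ioc_union_Ioi_eq_Ioi (s.coe_nonneg : (0:ℝ) ≤ s)]
    exact setIntegral_union (Ioc_disjoint_Ioi le_rfl) measurableSet_Ioi
      (hint.mono_set subset_union_left) (hint.mono_set subset_union_right)
  rw [hsplit]
  congr 1
  · refine setIntegral_congr_fun measurableSet_Ioc fun t ht => ?_
    have h1 : t.toNNReal ≤ s := Real.toNNReal_le_iff_le_coe.mpr ht.2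
    simp [splice, h1]
  · have heq : ∀ t ∈ Ioi (s : ℝ),
        Real.exp (-lam * t) * phi ((splice s w v h) (Real.toNNReal t)) =
        Real.exp (-lam * t) * phi (v (Real.toNNReal t - s)) := by
      intro t ht
      have h1 : ¬ t.toNNReal ≤ s := by
        rw [Real.toNNReal_le_iff_le_coe]; exact not_le.mpr ht
      simp [splice, h1]
    rw [setIntegral_congr_fun measurableSet_Ioi heq,
      shift_Ioi (fun t => Real.exp (-lam * t) * phi (v (Real.toNNReal t - s))) s,
      ← integral_const_mul]
    apply setIntegral_congr_fun measurableSet_Ioi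
    intro t ht
    have ht0 : (0:ℝ) ≤ t := le_of_lt ht
    have h2 : Real.toNNReal (t + s) - s = Real.toNNReal t := by
      rw [Real.toNNReal_add ht0 s.coe_nonneg, Real.toNNReal_coe, add_tsub_cancel_right]
    simp only []
    rw [h2, ← mul_assoc, ← Real.exp_add]
    ring_nf

lemma splice_shift (s : ℝ≥0) (w : IPath X) (h : w s = shift s w 0) :
    splice s w (shift s w) h = w := by
  ext t
  simp only [splice, shift, ContinuousMap.coe_mk, ContinuousMap.comp_apply,
    ContinuousMap.coe_mk]
  split
  · rfl
  · rename_i ht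
    congr 1
    exact add_tsub_cancel_of_le (le_of_not_ge ht)

/-- If `w` maximizes `ζ` over `S(x)`, then for every `s ≥ 0` the shifted path `θ_s w`
maximizes `ζ` over `S(w(s))`. -/
theorem shift_of_maximizer_is_maximizer
    {X : Type*} [MetricSpace X] [CompleteSpace X] [SecondCountableTopology X]
    (S : X → Set (IPath X))
    (hS0 : ∀ x, ∀ w ∈ S x, w 0 = x)
    (hS3 : ∀ x, ∀ w ∈ S x, ∀ s : ℝ≥0, shift s w ∈ S (w s))
    (hS4 : ∀ x, ∀ w ∈ S x, ∀ s : ℝ≥0, ∀ v, ∀ hv : v ∈ S (w s),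
      splice s w v ((hS0 _ v hv).symm) ∈ S x)
    (lam : ℝ) (hlam : 0 < lam)
    (phi : X → ℝ) (hphic : Continuous phi) (hphib : ∃ M, ∀ y, |phi y| ≤ M)
    (x : X) (w : IPath X) (hw : w ∈ S x)
    (hmax : ∀ v ∈ S x, zeta lam phi v ≤ zeta lam phi w)
    (s : ℝ≥0) :
    shift s w ∈ S (w s) ∧
      ∀ v ∈ S (w s), zeta lam phi v ≤ zeta lam phi (shift s w) := by
  obtain ⟨M, hM⟩ := hphib
  refine ⟨hS3 x w hw s, fun v hv => ?_⟩
  have hsp : splice s w v ((hS0 _ v hv).symm) ∈ S x := hS4 x w hw s v hv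
  have h1 : zeta lam phi (splice s w v ((hS0 _ v hv).symm)) ≤ zeta lam phi w := hmax _ hsp
  have hws : w s = shift s w 0 := by simp [shift]
  have h2 : zeta lam phi w = zeta lam phi (splice s w (shift s w) hws) := by
    rw [splice_shift]
  rw [h2, zeta_splice lam hlam phi hphic hM, zeta_splice lam hlam phi hphic hM] at h1
  have h3 := (add_le_add_iff_left _).mp h1
  exact le_of_mul_le_mul_left h3 (Real.exp_pos _)
end
end

section
/- Let X¹ ⊆ X² ⊆ X³ ⊆ ⋯ be an increasing sequence of T1 topological spaces such that each inclusion map φ_i : X^i → X^{i+1} is a homeomorphism onto a closed subset of X^{i+1}, and let X = ⋃_n X^n carry the final (direct-limit) topology determined by the inclusions f_i : X^i → X. Then for every compact subset K ⊆ X there exists an index i₀ such that K ⊆ X^i for all i ≥ i₀. -/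
open Set

/-! Pick `x n ∈ K \ A n`. Since the `A i` increase, each `A i` contains only the finitely many
points `x n` with `n < i`, and finite sets are closed in the `T1` spaces `A i`. The same holds for
every subset of `range x`, so by finality of the topology `range x` is a closed discrete subset
of the compact set `K`, hence finite; but a finite set lies in a single `A m`, which is
impossible as `x m ∉ A m`. -/

section FinalTopology

variable {X ι : Type*} [TopologicalSpace X] {A : ι → Set X}

theorem isClosed_of_forall_isClosed_preimage_val
    (hfinal : ∀ U : Set X, IsOpen U ↔ ∀ i, IsOpen (Subtype.val ⁻¹' U : Set (A i)))
    {C : Set X} (hC : ∀ i, IsClosed (Subtype.val ⁻¹' C : Set (A i))) : IsClosed C := by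
  rw [← isOpen_compl_iff, hfinal]
  exact fun i => (hC i).isOpen_compl

theorem isClosed_of_forall_finite_inter
    (hfinal : ∀ U : Set X, IsOpen U ↔ ∀ i, IsOpen (Subtype.val ⁻¹' U : Set (A i)))
    (hT1 : ∀ i, T1Space (A i)) {S : Set X} (hS : ∀ i, (S ∩ A i).Finite) : IsClosed S := by
  refine isClosed_of_forall_isClosed_preimage_val hfinal fun i => ?_
  have hfin : (Subtype.val ⁻¹' S : Set (A i)).Finite :=
    (hS i).preimage Subtype.val_injective.injOn |>.subset fun a ha => ⟨ha, a.2⟩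
  exact hfin.isClosed

theorem IsCompact.finite_of_forall_finite_inter
    (hfinal : ∀ U : Set X, IsOpen U ↔ ∀ i, IsOpen (Subtype.val ⁻¹' U : Set (A i)))
    (hT1 : ∀ i, T1Space (A i)) {S : Set X} (hS : IsCompact S) (hSA : ∀ i, (S ∩ A i).Finite) :
    S.Finite := by
  refine hS.finite (isDiscrete_iff_forall_mem_exists_isClosed.mpr fun T hT => ?_)
  refine ⟨T, isClosed_of_forall_finite_inter hfinal hT1 fun i => ?_, inter_eq_left.mpr hT⟩
  exact (hSA i).subset (inter_subset_inter_left _ hT)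

end FinalTopology

theorem exists_subset_of_isCompact {X : Type*} [TopologicalSpace X]
    {A : ℕ → Set X} (hmono : Monotone A) (hcover : ⋃ i, A i = univ)
    (hfinal : ∀ U : Set X, IsOpen U ↔ ∀ i, IsOpen (Subtype.val ⁻¹' U : Set (A i)))
    (hT1 : ∀ i, T1Space (A i)) {K : Set X} (hK : IsCompact K) : ∃ i, K ⊆ A i := by
  by_contra! hKA
  choose x hxK hxA using fun n => not_subset.mp (hKA n)
  have hfin_inter : ∀ i, (range x ∩ A i).Finite := fun i => by
    refine ((finite_Iio i).image x).subset ?_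
    rintro _ ⟨⟨n, rfl⟩, hn⟩
    exact ⟨n, not_le.mp fun hin => hxA n (hmono hin hn), rfl⟩
  have hcompact : IsCompact (range x) :=
    hK.of_isClosed_subset (isClosed_of_forall_finite_inter hfinal hT1 hfin_inter)
      (range_subset_iff.mpr hxK)
  have hfin := hcompact.finite_of_forall_finite_inter hfinal hT1 hfin_inter
  obtain ⟨m, hm⟩ := hmono.directed_le.exists_mem_subset_of_finset_subset_biUnion
    (s := hfin.toFinset) (by simp [hcover])
  exact hxA m (hm (by simp))

theorem compact_subset_of_directLimit_general
    {X : Type*} [TopologicalSpace X]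
    (A : ℕ → Set X) (hmono : Monotone A) (hcover : ⋃ i, A i = univ)
    (hfinal : ∀ U : Set X, IsOpen U ↔ ∀ i, IsOpen (Subtype.val ⁻¹' U : Set (A i)))
    (hT1 : ∀ i, T1Space (A i))
    (K : Set X) (hK : IsCompact K) :
    ∃ i₀ : ℕ, ∀ i ≥ i₀, K ⊆ A i := by
  obtain ⟨i₀, hKA⟩ := exists_subset_of_isCompact hmono hcover hfinal hT1 hK
  exact ⟨i₀, fun i hi => hKA.trans (hmono hi)⟩

/-- **Steenrod's lemma for direct limits.**  Let `X = ⋃ n, A n` be the union of an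
increasing sequence of subsets, each of which (with the subspace topology) is a `T1`
space, such that each `A i` is closed in `A (i+1)`, and such that the topology of `X`
is the final (direct-limit) topology determined by the inclusions `A i ↪ X` (a set is
open iff its trace on every `A i` is open).  Then every compact subset `K ⊆ X` is
contained in `A i` for all sufficiently large `i`. -/
theorem compact_subset_of_directLimit
    {X : Type*} [TopologicalSpace X]
    (A : ℕ → Set X) (hmono : Monotone A) (hcover : ⋃ i, A i = univ)
    (hfinal : ∀ U : Set X, IsOpen U ↔ ∀ i, IsOpen (Subtype.val ⁻¹' U : Set (A i)))
    (hT1 : ∀ i, T1Space (A i))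
    (hstep : ∀ i, IsClosed (Subtype.val ⁻¹' (A i) : Set (A (i + 1))))
    (K : Set X) (hK : IsCompact K) :
    ∃ i₀ : ℕ, ∀ i ≥ i₀, K ⊆ A i :=
  compact_subset_of_directLimit_general A hmono hcover hfinal hT1 K hK
end

section
/- Let X be a Polish space, Ω = C([0,∞) → X) with the compact-open topology, ℱ its Borel σ-algebra, (ℱ_t)_{t≥0} the natural filtration generated by the coordinate maps, θ_s the shift, and Ω_x = {w : w(0)=x}. Fix s ≥ 0, a probability measure P on (Ω, ℱ), and an ℱ_s-measurable map Q_• : w ↦ Q_w from Ω to the space of probability measures on Ω (i.e., w ↦ Q_w f is ℱ_s-measurable for every bounded continuous f) such that Q_w is supported on Ω_{w(s)} for every w. Then there exists a unique probability measure P ⊗_s Q on (Ω, ℱ) such that P ⊗_s Q agrees with P on ℱ_s, and the regular conditional probability distribution satisfies (P ⊗_s Q)[θ_s^{-1}(·) | ℱ_s](w) = Q_w(·) for (P ⊗_s Q)-almost all w ∈ Ω. -/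
open MeasureTheory Set
open scoped NNReal

noncomputable section

variable {X : Type*} [TopologicalSpace X]

/-- The natural filtration `ℱ_s`: the smallest σ-algebra on path space making all
coordinate maps `w ↦ w t`, `t ≤ s`, measurable. -/
def natF (X : Type*) [TopologicalSpace X] [MeasurableSpace X] (s : ℝ≥0) :
    MeasurableSpace (IPath X) :=
  ⨆ t ∈ Iic s, MeasurableSpace.comap (fun w : IPath X => w t) inferInstance

/-!
`P ⊗_s Q` is the image of the composition-product `P ⊗ₘ Q` on `Ω × Ω` under the gluing map
`(w, v) ↦ (w on [0, s], then v (· - s))`. Since `Q w` charges only paths starting at `w s`, for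
`Q w`-almost every `v` the glued path lies in a set `A ∈ ℱ_s` iff `w` does, and its shift by
`s` is `v`. This gives `R (A ∩ θ_s⁻¹ B) = ∫_A Q w B dP`, from which both required properties
follow.

Uniqueness: the sets `A ∩ θ_s⁻¹ B` form a π-system generating the Borel σ-algebra, because
on the path space of a Polish space the Borel σ-algebra is generated by the evaluations (a path is
determined by its values at countably many times).

That `w ↦ Q w B` is `ℱ_s`-measurable, so that `Q` is a kernel, follows from the hypothesis on
bounded continuous functions by approximating indicators of closed sets and a π-λ argument.
-/

open TopologicalSpace ProbabilityTheory
open scoped ENNReal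

section MeasureFamily

variable {α Y : Type*}

lemma setLIntegral_eq_of_forall_measure_eq {m m₀ : MeasurableSpace α} (hm : m ≤ m₀)
    {μ ν : Measure α} (hμν : ∀ A, MeasurableSet[m] A → μ A = ν A)
    {f : α → ℝ≥0∞} (hf : Measurable[m] f) {A : Set α} (hA : MeasurableSet[m] A) :
    ∫⁻ a in A, f a ∂μ = ∫⁻ a in A, f a ∂ν := by
  have htrim : μ.trim hm = ν.trim hm := by
    refine @Measure.ext _ m _ _ fun A hA => ?_
    rw [trim_measurableSet_eq hm hA, trim_measurableSet_eq hm hA, hμν A hA]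
  have hfA : Measurable[m] (A.indicator f) := hf.indicator hA
  rw [← lintegral_indicator (hm A hA), ← lintegral_indicator (hm A hA),
    ← lintegral_trim hm hfA, htrim, lintegral_trim hm hfA]

variable {m : MeasurableSpace α} [TopologicalSpace Y] [MeasurableSpace Y] [BorelSpace Y]
  [HasOuterApproxClosed Y] {μ : α → Measure Y} [∀ a, IsFiniteMeasure (μ a)]

lemma measurable_measure_apply_of_isClosed
    (hμ : ∀ f : BoundedContinuousFunction Y ℝ, Measurable[m] fun a => ∫ y, f y ∂(μ a))
    {F : Set Y} (hF : IsClosed F) : Measurable[m] fun a => μ a F := by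
  have hmeas_appr : ∀ n, Measurable[m] fun a => ∫⁻ y, hF.apprSeq n y ∂(μ a) := by
    intro n
    have hofReal : (fun a => ∫⁻ y, hF.apprSeq n y ∂(μ a)) =
        fun a => ENNReal.ofReal (∫ y, (hF.apprSeq n y : ℝ) ∂(μ a)) := by
      funext a
      rw [← BoundedContinuousFunction.toReal_lintegral_coe_eq_integral,
        ENNReal.ofReal_toReal (BoundedContinuousFunction.lintegral_lt_top_of_nnreal _ _).ne]
    rw [hofReal]
    exact ENNReal.measurable_ofReal.comp
      (hμ ((hF.apprSeq n).comp ((↑) : ℝ≥0 → ℝ) isometry_subtype_coe.lipschitz))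
  exact ENNReal.measurable_of_tendsto hmeas_appr <| tendsto_pi_nhds.2 fun a =>
    HasOuterApproxClosed.tendsto_lintegral_apprSeq hF (μ a)

lemma measurable_measure_apply
    (hμ : ∀ f : BoundedContinuousFunction Y ℝ, Measurable[m] fun a => ∫ y, f y ∂(μ a))
    {B : Set Y} (hB : MeasurableSet B) : Measurable[m] fun a => μ a B := by
  have hgen : (inferInstance : MeasurableSpace Y) =
      MeasurableSpace.generateFrom {F : Set Y | IsClosed F} := by
    rw [‹BorelSpace Y›.measurable_eq, borel_eq_generateFrom_isClosed]
  have hpi : IsPiSystem {F : Set Y | IsClosed F} := fun F₁ h₁ F₂ h₂ _ => h₁.inter h₂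
  induction B, hB using MeasurableSpace.induction_on_inter hgen hpi with
  | empty => simp
  | basic F hF => exact measurable_measure_apply_of_isClosed hμ hF
  | compl B hB hμB =>
    simp_rw [measure_compl hB (measure_ne_top _ _)]
    exact (measurable_measure_apply_of_isClosed hμ isClosed_univ).sub hμB
  | iUnion f hdisj hf hμf =>
    simp_rw [measure_iUnion hdisj hf]
    exact Measurable.tsum hμf

end MeasureFamily

namespace IPath

instance [PolishSpace X] : PolishSpace (IPath X) := by
  let := upgradeIsCompletelyMetrizable X
  infer_instance

lemma continuous_shift (s : ℝ≥0) : Continuous (shift (X := X) s) :=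
  ContinuousMap.continuous_precomp _

@[simp]
lemma shift_apply (s : ℝ≥0) (w : IPath X) (t : ℝ≥0) : shift s w t = w (s + t) := rfl

open Classical in
/-- If `v 0 ≠ w s` the two pieces do not match and the result is just `w`. -/
def glue (s : ℝ≥0) (w v : IPath X) : IPath X :=
  if h : v 0 = w s then
    ⟨fun t => if t ≤ s then w t else v (t - s),
      Continuous.if_le w.continuous (v.continuous.comp (by fun_prop)) continuous_id
        continuous_const fun t ht => by rw [ht, tsub_self, h]⟩
  else w

open Classical in
lemma glue_apply (s : ℝ≥0) (w v : IPath X) (t : ℝ≥0) :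
    glue s w v t = if v 0 = w s ∧ s < t then v (t - s) else w t := by
  by_cases h : v 0 = w s
  · by_cases ht : t ≤ s
    · simp [glue, h, ht]
    · simp [glue, h, ht, lt_of_not_ge ht]
  · simp [glue, h]

lemma glue_apply_of_le {s t : ℝ≥0} (ht : t ≤ s) (w v : IPath X) : glue s w v t = w t := by
  simp [glue_apply, not_lt.2 ht]

lemma shift_glue {s : ℝ≥0} {w v : IPath X} (h : v 0 = w s) : shift s (glue s w v) = v := by
  ext t
  rcases eq_or_ne t 0 with rfl | ht
  · simp [glue_apply, h]
  · simp [glue_apply, h, pos_iff_ne_zero.2 ht]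

variable [MeasurableSpace X]

lemma measurable_eval_natF {s t : ℝ≥0} (ht : t ≤ s) :
    Measurable[natF X s] fun w : IPath X => w t :=
  measurable_iff_comap_le.2 <| le_iSup₂
    (f := fun t (_ : t ∈ Iic s) => MeasurableSpace.comap (fun w : IPath X => w t) inferInstance)
    t ht

lemma natF_le_comap_restrict (s : ℝ≥0) :
    natF X s ≤ MeasurableSpace.comap (fun (w : IPath X) (t : Iic s) => w t) MeasurableSpace.pi :=
  iSup₂_le fun t ht => measurable_iff_comap_le.1 <|
    (measurable_pi_apply (⟨t, ht⟩ : Iic s)).comp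
      (comap_measurable (fun (w : IPath X) (t : Iic s) => w t))

lemma mem_iff_of_forall_le_eq {s : ℝ≥0} {A : Set (IPath X)} (hA : MeasurableSet[natF X s] A)
    {w₁ w₂ : IPath X} (h : ∀ t ≤ s, w₁ t = w₂ t) : w₁ ∈ A ↔ w₂ ∈ A := by
  obtain ⟨B, -, rfl⟩ := natF_le_comap_restrict s A hA
  have hrestrict : (fun t : Iic s => w₁ t) = fun t : Iic s => w₂ t := funext fun t => h t t.2
  simp only [Set.mem_preimage, hrestrict]

def shiftRectangles (s : ℝ≥0) : Set (Set (IPath X)) :=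
  {S | ∃ A, MeasurableSet[natF X s] A ∧ ∃ B, MeasurableSet B ∧ S = A ∩ shift s ⁻¹' B}

lemma isPiSystem_shiftRectangles (s : ℝ≥0) : IsPiSystem (shiftRectangles (X := X) s) := by
  rintro _ ⟨A₁, hA₁, B₁, hB₁, rfl⟩ _ ⟨A₂, hA₂, B₂, hB₂, rfl⟩ -
  refine ⟨A₁ ∩ A₂, hA₁.inter hA₂, B₁ ∩ B₂, hB₁.inter hB₂, ?_⟩
  ext w
  simp only [Set.mem_inter_iff, Set.mem_preimage]
  tauto

lemma measure_glue_preimage_inter_shift {s : ℝ≥0} {w : IPath X} {μ : Measure (IPath X)}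
    (hμ : ∀ᵐ v ∂μ, v 0 = w s) {A : Set (IPath X)} (hA : MeasurableSet[natF X s] A)
    (B : Set (IPath X)) :
    μ {v | glue s w v ∈ A ∩ shift s ⁻¹' B} = A.indicator (fun _ => μ B) w := by
  have hae : {v | glue s w v ∈ A ∩ shift s ⁻¹' B} =ᵐ[μ] {v | w ∈ A ∧ v ∈ B} := by
    refine Filter.eventuallyEq_set.2 ?_
    filter_upwards [hμ] with v hv
    rw [Set.mem_inter_iff, Set.mem_preimage, shift_glue hv,
      mem_iff_of_forall_le_eq hA fun t ht => glue_apply_of_le ht w v]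
  rw [measure_congr hae]
  by_cases hw : w ∈ A <;> simp [hw]

section Borel

variable [BorelSpace X]

lemma measurable_eval (t : ℝ≥0) : Measurable fun w : IPath X => w t :=
  (continuous_eval_const t).measurable

lemma natF_le (s : ℝ≥0) : natF X s ≤ (inferInstance : MeasurableSpace (IPath X)) :=
  iSup₂_le fun t _ => (measurable_eval t).comap_le

variable [PolishSpace X]

theorem measurableSpace_eq_iSup_comap_eval :
    (inferInstance : MeasurableSpace (IPath X)) =
      ⨆ t : ℝ≥0, MeasurableSpace.comap (fun w : IPath X => w t) inferInstance := by
  refine le_antisymm ?_ (iSup_le fun t => (measurable_eval t).comap_le)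
  set u : ℕ → ℝ≥0 := denseSeq ℝ≥0
  set Φ : IPath X → (ℕ → X) := fun w n => w (u n)
  have hΦ : MeasurableEmbedding Φ := by
    refine (continuous_pi fun n => continuous_eval_const (u n)).measurable.measurableEmbedding
      fun w₁ w₂ h => ?_
    exact ContinuousMap.ext <| congrFun <| (denseRange_denseSeq ℝ≥0).equalizer
      w₁.continuous w₂.continuous (funext fun n => congrFun h n)
  set evals : ℝ≥0 → MeasurableSpace (IPath X) :=
    fun t => MeasurableSpace.comap (fun w : IPath X => w t) inferInstance
  have hΦ_iSup : Measurable[⨆ t, evals t] Φ :=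
    @measurable_pi_lambda _ _ _ (_) _ Φ fun n => measurable_iff_comap_le.2 <| le_iSup evals (u n)
  intro S hS
  rw [← Set.preimage_image_eq S hΦ.injective]
  exact hΦ_iSup (hΦ.measurableSet_image.2 hS)

lemma measurable_iff_forall_measurable_eval {α : Type*} {m : MeasurableSpace α}
    {f : α → IPath X} : Measurable f ↔ ∀ t, Measurable fun a => f a t := by
  refine ⟨fun hf t => (measurable_eval t).comp hf, fun h => ?_⟩
  rw [measurable_iff_comap_le]
  refine (MeasurableSpace.comap_mono measurableSpace_eq_iSup_comap_eval.le).trans ?_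
  rw [MeasurableSpace.comap_iSup]
  exact iSup_le fun t => by rw [MeasurableSpace.comap_comp]; exact (h t).comap_le

lemma measurable_glue (s : ℝ≥0) :
    Measurable fun p : IPath X × IPath X => glue s p.1 p.2 := by
  refine measurable_iff_forall_measurable_eval.2 fun t => ?_
  simp_rw [glue_apply]
  refine Measurable.ite ?_ ((measurable_eval (t - s)).comp measurable_snd)
    ((measurable_eval t).comp measurable_fst)
  exact (measurableSet_eq_fun ((measurable_eval 0).comp measurable_snd)
    ((measurable_eval s).comp measurable_fst)).inter (MeasurableSet.const _)

lemma generateFrom_shiftRectangles (s : ℝ≥0) :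
    (inferInstance : MeasurableSpace (IPath X)) =
      MeasurableSpace.generateFrom (shiftRectangles s) := by
  refine le_antisymm ?_ <| MeasurableSpace.generateFrom_le ?_
  · have hid : Measurable[MeasurableSpace.generateFrom (shiftRectangles s)]
        (id : IPath X → IPath X) := by
      refine measurable_iff_forall_measurable_eval.2 fun t U hU =>
        MeasurableSpace.measurableSet_generateFrom ?_
      by_cases ht : t ≤ s
      · exact ⟨_, measurable_eval_natF ht hU, Set.univ, .univ, by simp⟩
      · refine ⟨Set.univ, .univ, _, measurable_eval (t - s) hU, ?_⟩
        ext w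
        simp [add_tsub_cancel_of_le (le_of_not_ge ht)]
    simpa using measurable_iff_comap_le.1 hid
  · rintro _ ⟨A, hA, B, hB, rfl⟩
    exact (natF_le s A hA).inter ((continuous_shift s).measurable hB)

lemma ext_of_inter_shift_preimage (s : ℝ≥0) {μ ν : Measure (IPath X)} [IsFiniteMeasure μ]
    (h : ∀ A, MeasurableSet[natF X s] A → ∀ B, MeasurableSet B →
      μ (A ∩ shift s ⁻¹' B) = ν (A ∩ shift s ⁻¹' B)) : μ = ν :=
  ext_of_generate_finite _ (generateFrom_shiftRectangles s) (isPiSystem_shiftRectangles s)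
    (by rintro _ ⟨A, hA, B, hB, rfl⟩; exact h A hA B hB)
    (by simpa using h Set.univ .univ Set.univ .univ)

def otimes (s : ℝ≥0) (P : Measure (IPath X)) (κ : Kernel (IPath X) (IPath X)) :
    Measure (IPath X) :=
  (P ⊗ₘ κ).map fun p => glue s p.1 p.2

instance (s : ℝ≥0) (P : Measure (IPath X)) [IsProbabilityMeasure P]
    (κ : Kernel (IPath X) (IPath X)) [IsMarkovKernel κ] :
    IsProbabilityMeasure (otimes s P κ) :=
  Measure.isProbabilityMeasure_map (measurable_glue s).aemeasurable

variable {s : ℝ≥0} {P : Measure (IPath X)} {κ : Kernel (IPath X) (IPath X)}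

lemma otimes_inter_shift_preimage [SFinite P] [IsSFiniteKernel κ]
    (hκ : ∀ w, ∀ᵐ v ∂κ w, v 0 = w s) {A : Set (IPath X)} (hA : MeasurableSet[natF X s] A)
    {B : Set (IPath X)} (hB : MeasurableSet B) :
    otimes s P κ (A ∩ shift s ⁻¹' B) = ∫⁻ w in A, κ w B ∂P := by
  have hS : MeasurableSet (A ∩ shift s ⁻¹' B) :=
    (natF_le s A hA).inter ((continuous_shift s).measurable hB)
  rw [otimes, Measure.map_apply (measurable_glue s) hS,
    Measure.compProd_apply (measurable_glue s hS), ← lintegral_indicator (natF_le s A hA)]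
  exact lintegral_congr fun w => measure_glue_preimage_inter_shift (hκ w) hA B

lemma otimes_apply_of_measurableSet_natF [SFinite P] [IsMarkovKernel κ]
    (hκ : ∀ w, ∀ᵐ v ∂κ w, v 0 = w s) {A : Set (IPath X)}
    (hA : MeasurableSet[natF X s] A) : otimes s P κ A = P A := by
  simpa using otimes_inter_shift_preimage (P := P) hκ hA .univ

end Borel

end IPath

open IPath in
/-- The condition `R[θ_s⁻¹(·) | ℱ_s] = Q` `R`-a.e. is encoded as
`R (A ∩ θ_s⁻¹ B) = ∫_A Q w B dR` for all `A ∈ ℱ_s` and Borel `B`. -/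
theorem exists_unique_otimes
    {X : Type*} [TopologicalSpace X] [PolishSpace X] [MeasurableSpace X] [BorelSpace X]
    (s : ℝ≥0) (P : Measure (IPath X)) [IsProbabilityMeasure P]
    (Q : IPath X → Measure (IPath X))
    (hQprob : ∀ w, IsProbabilityMeasure (Q w))
    (hQmeas : ∀ f : BoundedContinuousFunction (IPath X) ℝ,
      Measurable[natF X s] fun w => ∫ v, f v ∂(Q w))
    (hQsupp : ∀ w : IPath X, Q w {v : IPath X | v 0 = w s} = 1) :
    ∃! R : Measure (IPath X), IsProbabilityMeasure R ∧
      (∀ A : Set (IPath X), MeasurableSet[natF X s] A → R A = P A) ∧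
      (∀ A : Set (IPath X), MeasurableSet[natF X s] A →
        ∀ B : Set (IPath X), MeasurableSet B →
          R (A ∩ shift s ⁻¹' B) = ∫⁻ w, Q w B ∂(R.restrict A)) := by
  have hQ : ∀ B, MeasurableSet B → Measurable[natF X s] fun w => Q w B :=
    fun B hB => measurable_measure_apply hQmeas hB
  let κ : Kernel (IPath X) (IPath X) :=
    ⟨Q, Measure.measurable_of_measurable_coe Q fun B hB => (hQ B hB).mono (natF_le s) le_rfl⟩
  have : IsMarkovKernel κ := ⟨hQprob⟩
  have hκ : ∀ w, ∀ᵐ v ∂κ w, v 0 = w s := fun w =>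
    (ae_iff_measure_eq (measurableSet_eq_fun (measurable_eval 0)
      measurable_const).nullMeasurableSet).2 (by rw [measure_univ]; exact hQsupp w)
  have hcond : ∀ μ : Measure (IPath X), (∀ A, MeasurableSet[natF X s] A → μ A = P A) →
      ∀ A : Set (IPath X), MeasurableSet[natF X s] A →
        ∀ B : Set (IPath X), MeasurableSet B →
          ∫⁻ w in A, Q w B ∂μ = ∫⁻ w in A, Q w B ∂P :=
    fun μ hμ A hA B hB => setLIntegral_eq_of_forall_measure_eq (natF_le s) hμ (hQ B hB) hA
  have hP : ∀ A, MeasurableSet[natF X s] A → otimes s P κ A = P A :=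
    fun A hA => otimes_apply_of_measurableSet_natF hκ hA
  refine ⟨otimes s P κ, ⟨inferInstance, hP, fun A hA B hB => ?_⟩, ?_⟩
  · rw [hcond _ hP A hA B hB]
    exact otimes_inter_shift_preimage hκ hA hB
  · rintro R ⟨-, hRP, hRcond⟩
    refine (ext_of_inter_shift_preimage s fun A hA B hB => ?_).symm
    rw [otimes_inter_shift_preimage hκ hA hB, hRcond A hA B hB, hcond R hRP A hA B hB]
    rfl
end
end

section
/- Let X be a Polish space and Ω = C([0,∞) → X) with the compact-open topology. Let Φ be a countable family of bounded continuous real-valued functions on X that strongly separates points of X and is closed under multiplication, and let Λ be a dense subset of (0,∞). If P₁ and P₂ are Borel probability measures on Ω such that ∫₀^∞ e^{−λt} ∫_Ω φ(w(t)) P₁(dw) dt = ∫₀^∞ e^{−λt} ∫_Ω φ(w(t)) P₂(dw) dt for every λ ∈ Λ and every φ ∈ Φ, then the one-dimensional marginals agree: P₁ ∘ π_t^{-1} = P₂ ∘ π_t^{-1} for every t ≥ 0, where π_t(w) = w(t). -/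
/-!
For `φ ∈ Φ` the functions `Fᵢ t = ∫ φ (w t) dPᵢ` are bounded and continuous. Their Laplace
transforms are continuous in `λ > 0`, so they agree on all of `(0, ∞)` and not only on `Λ`. The
substitution `u = e^{-t}` turns the Laplace transform of `F₁ - F₂` at `λ = n + 2` into the `n`-th
moment of a continuous function on `[0, 1]`; all moments vanish, so by Weierstrass the function
does, and `F₁ = F₂` on `[0, ∞)`. Hence the marginals at time `t` integrate every `φ ∈ Φ` alike.
The span of `Φ ∪ {1}` is a point-separating algebra of bounded continuous functions, and such an
algebra separates finite Borel measures on a Polish space.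
-/

open MeasureTheory Set
open scoped NNReal

noncomputable section

variable {X : Type*} [TopologicalSpace X]

open Real Filter Topology BoundedContinuousFunction Submodule

theorem Submodule.mul_mem_span_of_mul_mem {R A : Type*} [CommSemiring R] [Semiring A] [Algebra R A]
    {s : Set A} (hs : ∀ a ∈ s, ∀ b ∈ s, a * b ∈ s) {x y : A} (hx : x ∈ span R s)
    (hy : y ∈ span R s) : x * y ∈ span R s :=
  span_mono (Set.mul_subset_iff.2 hs) (span_mul_span R s s ▸ mul_mem_mul hx hy)

namespace BoundedContinuousFunction

variable {E : Type*} [TopologicalSpace E] [MeasurableSpace E]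

def spanStarSubalgebra (Φ : Set (E →ᵇ ℝ)) (hΦ : ∀ φ ∈ Φ, ∀ ψ ∈ Φ, φ * ψ ∈ Φ) :
    StarSubalgebra ℝ (E →ᵇ ℝ) where
  toSubalgebra := (span ℝ (insert 1 Φ)).toSubalgebra (subset_span (mem_insert 1 Φ))
    fun _ _ => mul_mem_span_of_mul_mem (by
      rintro _ (rfl | hφ) _ (rfl | hψ)
      · simp
      · simpa using mem_insert_of_mem 1 hψ
      · simpa using mem_insert_of_mem 1 hφ
      · exact mem_insert_of_mem 1 (hΦ _ hφ _ hψ))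
  star_mem' {f} hf := (show star f = f by ext; simp) ▸ hf

theorem integral_eq_of_mem_span [OpensMeasurableSpace E] {P P' : Measure E} [IsFiniteMeasure P]
    [IsFiniteMeasure P'] {s : Set (E →ᵇ ℝ)} (h : ∀ g ∈ s, ∫ x, g x ∂P = ∫ x, g x ∂P')
    {g : E →ᵇ ℝ} (hg : g ∈ span ℝ s) : ∫ x, g x ∂P = ∫ x, g x ∂P' := by
  induction hg using span_induction with
  | mem g hg => exact h g hg
  | zero => simp
  | add f g _ _ hf hg =>
    rw [coe_add, integral_add' (f.integrable _) (g.integrable _),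
      integral_add' (f.integrable _) (g.integrable _), hf, hg]
  | smul c g _ hg => simp [integral_const_mul, hg]

end BoundedContinuousFunction

theorem MeasureTheory.ext_of_forall_integral_eq_of_separatesPoints_of_polish {E : Type*}
    [TopologicalSpace E] [MeasurableSpace E] [PolishSpace E] [BorelSpace E] {P P' : Measure E}
    [IsProbabilityMeasure P] [IsProbabilityMeasure P'] (Φ : Set (E →ᵇ ℝ))
    (hsep : ∀ x y, x ≠ y → ∃ φ ∈ Φ, φ x ≠ φ y) (hmul : ∀ φ ∈ Φ, ∀ ψ ∈ Φ, φ * ψ ∈ Φ)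
    (h : ∀ φ ∈ Φ, ∫ x, φ x ∂P = ∫ x, φ x ∂P') : P = P' := by
  refine ext_of_forall_mem_subalgebra_integral_eq_of_polish (A := spanStarSubalgebra Φ hmul)
    (fun x y hxy => ?_) fun g hg => integral_eq_of_mem_span ?_ hg
  · obtain ⟨φ, hφ, hφxy⟩ := hsep x y hxy
    exact ⟨φ, ⟨φ.toContinuousMap, ⟨φ, subset_span (mem_insert_of_mem 1 hφ), rfl⟩, rfl⟩, hφxy⟩
  · rintro g (rfl | hg)
    · simp
    · exact h g hg

def laplaceTransform (F : ℝ → ℝ) (lam : ℝ) : ℝ :=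
  ∫ s in Ioi 0, exp (-lam * s) * F s

theorem integrableOn_exp_neg_mul_mul (F : ℝ →ᵇ ℝ) {lam : ℝ} (hlam : 0 < lam) :
    IntegrableOn (fun s => exp (-lam * s) * F s) (Ioi 0) :=
  (exp_neg_integrableOn_Ioi 0 hlam).mul_bdd F.continuous.aestronglyMeasurable
    (ae_of_all _ F.norm_coe_le_norm)

theorem laplaceTransform_sub (F G : ℝ →ᵇ ℝ) {lam : ℝ} (hlam : 0 < lam) :
    laplaceTransform ⇑(F - G) lam = laplaceTransform F lam - laplaceTransform G lam := by
  simp only [laplaceTransform, coe_sub, Pi.sub_apply, mul_sub]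
  exact integral_sub (integrableOn_exp_neg_mul_mul F hlam) (integrableOn_exp_neg_mul_mul G hlam)

theorem continuousOn_laplaceTransform (F : ℝ →ᵇ ℝ) :
    ContinuousOn (laplaceTransform F) (Ioi 0) := by
  intro lam₀ hlam₀
  refine ContinuousAt.continuousWithinAt <| continuousAt_of_dominated
    (bound := fun s => exp (-(lam₀ / 2) * s) * ‖F‖) (Eventually.of_forall fun lam => ?_) ?_
    ((exp_neg_integrableOn_Ioi 0 (half_pos hlam₀)).mul_const _) (ae_of_all _ fun s => by fun_prop)
  · exact (by fun_prop : Continuous fun s => exp (-lam * s) * F s).aestronglyMeasurable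
  · filter_upwards [Ioi_mem_nhds (half_lt_self hlam₀)] with lam hlam
    refine ae_restrict_of_forall_mem measurableSet_Ioi fun s (hs : 0 < s) => ?_
    rw [norm_mul, norm_of_nonneg (exp_pos _).le]
    gcongr
    · exact le_of_lt hlam
    · exact F.norm_coe_le_norm s

theorem integral_Ioi_exp_neg_mul_comp_exp_neg (g : ℝ → ℝ) :
    ∫ s in Ioi 0, exp (-s) * g (exp (-s)) = ∫ u in (0 : ℝ)..1, g u := by
  have himage : (fun s => exp (-s)) '' Ioi 0 = Ioo 0 1 := by
    ext u
    constructor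
    · rintro ⟨s, hs, rfl⟩
      exact ⟨exp_pos _, exp_lt_one_iff.2 (neg_neg_of_pos hs)⟩
    · rintro ⟨hu₀, hu₁⟩
      exact ⟨-log u, neg_pos.2 (log_neg hu₀ hu₁), by simp [exp_log hu₀]⟩
  rw [intervalIntegral.integral_of_le zero_le_one, integral_Ioc_eq_integral_Ioo, ← himage,
    integral_image_eq_integral_abs_deriv_smul measurableSet_Ioi
      (fun s _ => ((hasDerivAt_neg s).exp).hasDerivWithinAt)
      (fun a _ b _ hab => neg_injective (exp_injective hab))]
  simp

open Polynomial in
theorem intervalIntegrable_eval_mul {h : ℝ → ℝ} {a b : ℝ} (hh : ContinuousOn h (uIcc a b))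
    (p : ℝ[X]) : IntervalIntegrable (fun x => p.eval x * h x) volume a b :=
  (p.continuous.continuousOn.mul hh).intervalIntegrable

open Polynomial in
theorem intervalIntegral_eval_mul_eq_zero {h : ℝ → ℝ} {a b : ℝ} (hh : ContinuousOn h (uIcc a b))
    (hmom : ∀ n : ℕ, ∫ x in a..b, x ^ n * h x = 0) (p : ℝ[X]) :
    ∫ x in a..b, p.eval x * h x = 0 := by
  induction p using Polynomial.induction_on' with
  | add p q hp hq =>
    simp only [eval_add, add_mul]
    rw [intervalIntegral.integral_add (intervalIntegrable_eval_mul hh p)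
      (intervalIntegrable_eval_mul hh q), hp, hq, add_zero]
  | monomial n c =>
    simp only [eval_monomial, mul_assoc, intervalIntegral.integral_const_mul, hmom, mul_zero]

theorem eqOn_zero_of_forall_intervalIntegral_pow_mul_eq_zero {h : ℝ → ℝ} {a b : ℝ} (hab : a ≤ b)
    (hh : ContinuousOn h (Icc a b)) (hmom : ∀ n : ℕ, ∫ x in a..b, x ^ n * h x = 0) :
    EqOn h 0 (Ioc a b) := by
  rw [← uIcc_of_le hab] at hh
  have hsq_int : IntervalIntegrable (fun x => h x * h x) volume a b :=
    (hh.mul hh).intervalIntegrable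
  obtain ⟨C, hC⟩ := isCompact_uIcc.exists_bound_of_continuousOn hh
  -- `∫ h² = ∫ (h - p) h` for every polynomial `p`, and Weierstrass makes `h - p` small.
  have hsq_le : ∀ ε > 0, ∫ x in a..b, h x * h x ≤ ε * C * (b - a) := by
    intro ε hε
    obtain ⟨p, hp⟩ := exists_polynomial_near_of_continuousOn a b h (uIcc_of_le hab ▸ hh) ε hε
    have hdiff : ∫ x in a..b, h x * h x = ∫ x in a..b, (h x - p.eval x) * h x := by
      simp only [sub_mul]
      rw [intervalIntegral.integral_sub hsq_int (intervalIntegrable_eval_mul hh p),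
        intervalIntegral_eval_mul_eq_zero hh hmom, sub_zero]
    calc ∫ x in a..b, h x * h x
        ≤ ‖∫ x in a..b, (h x - p.eval x) * h x‖ := hdiff ▸ le_norm_self _
      _ ≤ ε * C * |b - a| := by
        refine intervalIntegral.norm_integral_le_of_norm_le_const fun x hx => ?_
        have hx' : x ∈ uIcc a b := uIoc_subset_uIcc hx
        rw [norm_mul, norm_sub_rev]
        gcongr
        · exact (hp x (uIcc_of_le hab ▸ hx')).le
        · exact hC x hx'
      _ = ε * C * (b - a) := by rw [abs_of_nonneg (sub_nonneg.2 hab)]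
  have hsq : ∫ x in a..b, h x * h x = 0 := by
    have hlim : Tendsto (fun ε => ε * C * (b - a)) (𝓝[>] 0) (𝓝 0) :=
      tendsto_nhdsWithin_of_tendsto_nhds <|
        (by fun_prop : Continuous fun ε : ℝ => ε * C * (b - a)).tendsto' 0 0 (by simp)
    exact le_antisymm (ge_of_tendsto hlim (eventually_nhdsWithin_of_forall hsq_le))
      (intervalIntegral.integral_nonneg hab fun x _ => mul_self_nonneg _)
  have hsq_ae := (intervalIntegral.integral_eq_zero_iff_of_le_of_nonneg_ae hab
    (ae_of_all _ fun x => mul_self_nonneg (h x)) hsq_int).1 hsq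
  intro x hx
  exact mul_self_eq_zero.1 (Measure.eqOn_Ioc_of_ae_eq volume hsq_ae
    ((hh.mul hh).mono (uIcc_of_le hab ▸ Ioc_subset_Icc_self)) continuousOn_const hx)

theorem continuous_mul_comp_neg_log_s13 (G : ℝ →ᵇ ℝ) : Continuous fun u => u * G (-log u) := by
  refine continuous_iff_continuousAt.2 fun u => ?_
  rcases eq_or_ne u 0 with rfl | hu
  · -- `|u G(-log u)| ≤ |u| ‖G‖`, whatever junk value `log 0` takes
    refine (squeeze_zero_norm (a := fun u => ‖u‖ * ‖G‖) (fun u => ?_) ?_).trans (by simp)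
    · rw [norm_mul]
      gcongr
      exact G.norm_coe_le_norm _
    · simpa using (continuous_norm.mul_const ‖G‖).tendsto (0 : ℝ)
  · exact continuousAt_id.mul (G.continuous.continuousAt.comp (continuousAt_log hu).neg)

-- The factor `u` in `u G(-log u)` makes it continuous at `0`, at the price of shifting `λ` by one.
theorem eqOn_zero_of_laplaceTransform_nat_add_two_eq_zero (G : ℝ →ᵇ ℝ)
    (hG : ∀ n : ℕ, laplaceTransform G (n + 2) = 0) : EqOn G 0 (Ici 0) := by
  have hmom : ∀ n : ℕ, ∫ u in (0 : ℝ)..1, u ^ n * (u * G (-log u)) = 0 := by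
    intro n
    refine (integral_Ioi_exp_neg_mul_comp_exp_neg _).symm.trans (Eq.trans ?_ (hG n))
    refine setIntegral_congr_fun measurableSet_Ioi fun s _ => ?_
    simp only [log_exp, neg_neg, ← exp_nat_mul, ← mul_assoc, ← exp_add]
    ring_nf
  have hzero := eqOn_zero_of_forall_intervalIntegral_pow_mul_eq_zero zero_le_one
    (continuous_mul_comp_neg_log_s13 G).continuousOn hmom
  intro s (hs : (0 : ℝ) ≤ s)
  have := hzero ⟨exp_pos (-s), exp_le_one_iff.2 (neg_nonpos.2 hs)⟩
  simpa [exp_ne_zero] using this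

theorem eqOn_of_laplaceTransform_eqOn (F₁ F₂ : ℝ →ᵇ ℝ) {Λ : Set ℝ} (hΛ : Λ ⊆ Ioi 0)
    (hΛdense : Ioi 0 ⊆ closure Λ) (h : EqOn (laplaceTransform F₁) (laplaceTransform F₂) Λ) :
    EqOn F₁ F₂ (Ici 0) := by
  have hall : EqOn (laplaceTransform F₁) (laplaceTransform F₂) (Ioi 0) :=
    h.of_subset_closure (continuousOn_laplaceTransform F₁) (continuousOn_laplaceTransform F₂)
      hΛ hΛdense
  have hsub := eqOn_zero_of_laplaceTransform_nat_add_two_eq_zero (F₁ - F₂) fun n => by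
    have hn : (0 : ℝ) < n + 2 := by positivity
    rw [laplaceTransform_sub F₁ F₂ hn, hall hn, sub_self]
  exact fun s hs => sub_eq_zero.1 (hsub hs)

def pathMean (P : Measure (IPath X)) [IsProbabilityMeasure P] (φ : X →ᵇ ℝ) : ℝ →ᵇ ℝ :=
  ofNormedAddCommGroup (fun s => ∫ w, φ (w s.toNNReal) ∂P)
    (continuous_of_dominated
      (fun s => (φ.continuous.comp (continuous_eval_const _)).aestronglyMeasurable)
      (fun s => ae_of_all _ fun w => φ.norm_coe_le_norm _) (integrable_const ‖φ‖)
      (ae_of_all _ fun w => φ.continuous.comp (w.continuous.comp continuous_real_toNNReal)))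
    ‖φ‖ fun s => by
      simpa using norm_integral_le_of_norm_le_const (μ := P)
        (ae_of_all _ fun w => φ.norm_coe_le_norm (w s.toNNReal))

theorem marginals_eq_of_laplace_functionals_eq_general
    {X : Type*} [TopologicalSpace X] [PolishSpace X] [MeasurableSpace X] [BorelSpace X]
    (Φ : Set (X → ℝ))
    (hΦc : ∀ φ ∈ Φ, Continuous φ)
    (hΦb : ∀ φ ∈ Φ, ∃ M, ∀ y, |φ y| ≤ M)
    (hΦsep : ∀ x : X, ∀ V ∈ nhds x, ∃ φ ∈ Φ, ∃ ε > 0, ∀ y ∉ V, ε ≤ |φ x - φ y|)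
    (hΦmul : ∀ φ ∈ Φ, ∀ ψ ∈ Φ, (fun y => φ y * ψ y) ∈ Φ)
    (Λ : Set ℝ) (hΛ : Λ ⊆ Ioi (0 : ℝ)) (hΛdense : Ioi (0 : ℝ) ⊆ closure Λ)
    (P₁ P₂ : Measure (IPath X)) [IsProbabilityMeasure P₁] [IsProbabilityMeasure P₂]
    (heq : ∀ lam ∈ Λ, ∀ φ ∈ Φ,
      (∫ t in Ioi (0 : ℝ), Real.exp (-lam * t) *
        ∫ w, φ (w (Real.toNNReal t)) ∂P₁) =
      (∫ t in Ioi (0 : ℝ), Real.exp (-lam * t) *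
        ∫ w, φ (w (Real.toNNReal t)) ∂P₂)) :
    ∀ t : ℝ≥0,
      Measure.map (fun w : IPath X => w t) P₁ =
      Measure.map (fun w : IPath X => w t) P₂ := by
  intro t
  have heval : Measurable fun w : IPath X => w t := (continuous_eval_const t).measurable
  have := Measure.isProbabilityMeasure_map (μ := P₁) heval.aemeasurable
  have := Measure.isProbabilityMeasure_map (μ := P₂) heval.aemeasurable
  let Ψ : Set (X →ᵇ ℝ) := {ψ | ⇑ψ ∈ Φ}
  have hΨsep : ∀ x y, x ≠ y → ∃ ψ ∈ Ψ, ψ x ≠ ψ y := by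
    intro x y hxy
    obtain ⟨φ, hφ, ε, hε, hsep⟩ := hΦsep x {y}ᶜ (isOpen_compl_singleton.mem_nhds hxy)
    obtain ⟨M, hM⟩ := hΦb φ hφ
    refine ⟨ofNormedAddCommGroup φ (hΦc φ hφ) M hM, hφ, fun hφxy => ?_⟩
    change φ x = φ y at hφxy
    exact not_le.2 hε (by simpa [hφxy] using hsep y (by simp))
  refine ext_of_forall_integral_eq_of_separatesPoints_of_polish Ψ hΨsep
    (fun ψ hψ χ hχ => hΦmul _ hψ _ hχ) fun ψ hψ => ?_
  have := eqOn_of_laplaceTransform_eqOn (pathMean P₁ ψ) (pathMean P₂ ψ) hΛ hΛdense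
    (fun lam hlam => heq lam hlam ψ hψ) t.coe_nonneg
  rw [integral_map heval.aemeasurable ψ.continuous.aestronglyMeasurable,
    integral_map heval.aemeasurable ψ.continuous.aestronglyMeasurable]
  simpa only [pathMean, coe_ofNormedAddCommGroup, Real.toNNReal_coe] using this

/-- If a countable family `Φ` of bounded continuous functions on a Polish space `X`
strongly separates points and is closed under multiplication, and two Borel
probability measures `P₁, P₂` on path space satisfy
`∫₀^∞ e^{-λt} ∫ φ(w(t)) Pᵢ(dw) dt = const` in `i` for all `λ` in a dense subset `Λ`
of `(0,∞)` and all `φ ∈ Φ`, then the one-dimensional marginals of `P₁` and `P₂`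
coincide: `P₁ ∘ π_t⁻¹ = P₂ ∘ π_t⁻¹` for every `t ≥ 0`. -/
theorem marginals_eq_of_laplace_functionals_eq
    {X : Type*} [TopologicalSpace X] [PolishSpace X] [MeasurableSpace X] [BorelSpace X]
    (Φ : Set (X → ℝ)) (hΦcount : Φ.Countable)
    (hΦc : ∀ φ ∈ Φ, Continuous φ)
    (hΦb : ∀ φ ∈ Φ, ∃ M, ∀ y, |φ y| ≤ M)
    (hΦsep : ∀ x : X, ∀ V ∈ nhds x, ∃ φ ∈ Φ, ∃ ε > 0, ∀ y ∉ V, ε ≤ |φ x - φ y|)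
    (hΦmul : ∀ φ ∈ Φ, ∀ ψ ∈ Φ, (fun y => φ y * ψ y) ∈ Φ)
    (Λ : Set ℝ) (hΛ : Λ ⊆ Ioi (0 : ℝ)) (hΛdense : Ioi (0 : ℝ) ⊆ closure Λ)
    (P₁ P₂ : Measure (IPath X)) [IsProbabilityMeasure P₁] [IsProbabilityMeasure P₂]
    (heq : ∀ lam ∈ Λ, ∀ φ ∈ Φ,
      (∫ t in Ioi (0 : ℝ), Real.exp (-lam * t) *
        ∫ w, φ (w (Real.toNNReal t)) ∂P₁) =
      (∫ t in Ioi (0 : ℝ), Real.exp (-lam * t) *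
        ∫ w, φ (w (Real.toNNReal t)) ∂P₂)) :
    ∀ t : ℝ≥0,
      Measure.map (fun w : IPath X => w t) P₁ =
      Measure.map (fun w : IPath X => w t) P₂ :=
  marginals_eq_of_laplace_functionals_eq_general Φ hΦc hΦb hΦsep hΦmul Λ hΛ hΛdense P₁ P₂ heq
end
end

section
/- Let f : ℝ^d → ℝ^d be continuous, and for x ∈ ℝ^d let S(x) ⊆ Ω = C([0,∞) → ℝ^d) be the set of all global solutions u with u(t) = x + ∫₀^t f(u(s)) ds for all t ≥ 0, where Ω carries the topology of uniform convergence on compact subsets of [0,∞). Assume that for every x the set S(x) is nonempty, and that for every compact K ⊆ ℝ^d the set S(K) = ⋃_{x ∈ K} S(x) is compact in Ω. Then for every closed set 𝒦 ⊆ Ω, the set S^-(𝒦) = {x ∈ ℝ^d : S(x) ∩ 𝒦 ≠ ∅} is closed in ℝ^d; in particular the set-valued map x ↦ S(x) is measurable. -/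
open MeasureTheory Set
open scoped NNReal

noncomputable section

/-- The integral funnel `S(x)`: all global solutions of `du/dt = f(u)`, `u(0) = x`,
in integral form `u(t) = x + ∫₀^t f(u(s)) ds`. -/
def sol {d : ℕ} (f : EuclideanSpace ℝ (Fin d) → EuclideanSpace ℝ (Fin d))
    (x : EuclideanSpace ℝ (Fin d)) : Set (IPath (EuclideanSpace ℝ (Fin d))) :=
  {u | ∀ t : ℝ≥0, u t = x + ∫ s in Ioc (0 : ℝ) (t : ℝ), f (u (Real.toNNReal s))}

/-- For a continuous `f : ℝ^d → ℝ^d` all of whose solutions are global, with compact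
integral funnels over compacta (Aronszajn), the set-valued map `x ↦ S(x)` is upper
semicontinuous in the sense that `S⁻(𝒦) = {x : S(x) ∩ 𝒦 ≠ ∅}` is closed for every
closed `𝒦 ⊆ Ω`; in particular `S⁻(𝒦)` is Borel, i.e. the map `S` is measurable. -/
theorem ode_funnel_measurable
    {d : ℕ} (f : EuclideanSpace ℝ (Fin d) → EuclideanSpace ℝ (Fin d))
    (hf : Continuous f)
    (hne : ∀ x, (sol f x).Nonempty)
    (hcpt : ∀ K : Set (EuclideanSpace ℝ (Fin d)), IsCompact K →
      IsCompact (⋃ x ∈ K, sol f x))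
    (𝒦 : Set (IPath (EuclideanSpace ℝ (Fin d)))) (h𝒦 : IsClosed 𝒦) :
    IsClosed {x | (sol f x ∩ 𝒦).Nonempty} ∧
      MeasurableSet {x | (sol f x ∩ 𝒦).Nonempty} := by
  -- any solution starts at its base point
  have hzero : ∀ y (u : IPath (EuclideanSpace ℝ (Fin d))), u ∈ sol f y → u 0 = y := by
    intro y u hu
    have h := hu 0
    simpa using h
  set A := {x | (sol f x ∩ 𝒦).Nonempty} with hAdef
  -- a choice of solution through 𝒦 when possible, any solution otherwise
  classical
  set g : EuclideanSpace ℝ (Fin d) → IPath (EuclideanSpace ℝ (Fin d)) :=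
    fun a => if h : a ∈ A then h.choose else (hne a).choose with hg
  have hg1 : ∀ a ∈ A, g a ∈ sol f a := by
    intro a ha
    simp only [hg, dif_pos ha]
    exact ha.choose_spec.1
  have hg2 : ∀ a ∈ A, g a ∈ 𝒦 := by
    intro a ha
    simp only [hg, dif_pos ha]
    exact ha.choose_spec.2
  have hA : IsClosed A := by
    rw [← closure_subset_iff_isClosed]
    intro x hx
    obtain ⟨F, hFA, hFx⟩ := mem_closure_iff_ultrafilter.mp hx
    set K := Metric.closedBall x 1 with hK
    have hKF : K ∈ F := hFx (Metric.closedBall_mem_nhds x one_pos)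
    have hSK : IsCompact (⋃ y ∈ K, sol f y) := hcpt K (isCompact_closedBall x 1)
    set G := F.map g with hGdef
    have hGS : (⋃ y ∈ K, sol f y) ∈ G := by
      refine Ultrafilter.mem_map.mpr (F.mem_of_superset (Filter.inter_mem hFA hKF) ?_)
      intro a ⟨ha, haK⟩
      exact mem_iUnion₂.mpr ⟨a, haK, hg1 a ha⟩
    obtain ⟨u, huS, hGu⟩ := hSK.ultrafilter_le_nhds G (Filter.le_principal_iff.mpr hGS)
    -- u ∈ 𝒦 since 𝒦 is closed and G-eventually in 𝒦
    have hG𝒦 : 𝒦 ∈ G :=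
      Ultrafilter.mem_map.mpr (F.mem_of_superset hFA (fun a ha => hg2 a ha))
    have hu𝒦 : u ∈ 𝒦 := by
      have : ClusterPt u (Filter.principal 𝒦) :=
        Filter.NeBot.mono G.neBot (le_inf hGu (Filter.le_principal_iff.mpr hG𝒦))
      exact h𝒦.closure_eq ▸ mem_closure_iff_clusterPt.mpr this
    -- u 0 = x
    have heval : Filter.Tendsto (fun v : IPath (EuclideanSpace ℝ (Fin d)) => v 0)
        (nhds u) (nhds (u 0)) :=
      (continuous_eval_const (0 : ℝ≥0)).continuousAt
    have h1 : Filter.Tendsto (fun a => g a 0) (F : Filter _) (nhds (u 0)) :=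
      heval.comp hGu
    have h2 : Filter.Tendsto (fun a => g a 0) (F : Filter _) (nhds x) := by
      refine Filter.Tendsto.congr' ?_ (hFx : Filter.Tendsto id (F : Filter _) (nhds x))
      filter_upwards [hFA] with a ha
      exact (hzero a (g a) (hg1 a ha)).symm
    have hux : u 0 = x := tendsto_nhds_unique h1 h2
    obtain ⟨y, hyK, huy⟩ := mem_iUnion₂.mp huS
    have : y = x := by rw [← hzero y u huy, hux]
    exact ⟨u, this ▸ huy, hu𝒦⟩
  exact ⟨hA, hA.measurableSet⟩
end
end

section
/- Let H : ℝ → ℝ be defined by H(u) = 1 for u > 0 and H(u) = 0 for u ≤ 0. Then the set of continuous functions u : [0,∞) → ℝ satisfying u(t) = ∫₀^t H(u(s)) ds for all t ≥ 0 is exactly the family {v_c : c ∈ [0,∞]}, where v_c(t) = max(t − c, 0) for c ∈ [0,∞) and v_∞(t) = 0 for all t ≥ 0. -/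
/-!
A solution integrates a nonnegative right-hand side, so it is nondecreasing and vanishes at `0`.
Hence the set of times where it is positive is an open (by continuity) upper set not containing
`0`: either empty, or a half-line `(c, ∞)` with `c ≥ 0`. The integrand `H(u(s))` is then `0`,
respectively the indicator of `(c, ∞)`, whose integral over `(0, t]` is `max(t - c, 0)`.
Conversely `H(max(s - c, 0))` is exactly that indicator.
-/

open MeasureTheory Set
open scoped NNReal

noncomputable section

/-- The discontinuous right-hand side `H(u) = 1` for `u > 0`, `H(u) = 0` for `u ≤ 0`. -/
def Hside (u : ℝ) : ℝ := if 0 < u then 1 else 0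

theorem Hside_eq_indicator : Hside = (Ioi 0).indicator 1 := by
  ext x
  simp [Hside, indicator]

theorem Hside_nonneg (x : ℝ) : 0 ≤ Hside x := by
  rw [Hside_eq_indicator]
  exact indicator_nonneg (fun _ _ => zero_le_one) x

theorem Hside_comp {α : Type*} (g : α → ℝ) :
    (fun x => Hside (g x)) = {x | 0 < g x}.indicator 1 := by
  ext x
  rw [Hside_eq_indicator]
  exact (indicator_comp_right g).symm

theorem Hside_max_sub_zero (s c : ℝ) : Hside (max (s - c) 0) = (Ioi c).indicator 1 s := by
  simp [Hside, indicator]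

theorem integrableOn_Hside_comp {α : Type*} [MeasurableSpace α] {μ : Measure α} {g : α → ℝ}
    (hg : Measurable g) {s : Set α} (hs : μ s ≠ ⊤) : IntegrableOn (fun x => Hside (g x)) s μ := by
  rw [Hside_comp]
  exact (integrableOn_const hs).indicator (hg measurableSet_Ioi)

theorem setIntegral_Ioc_indicator_Ioi_one {a b c : ℝ} (hac : a ≤ c) :
    ∫ s in Ioc a b, (Ioi c).indicator (1 : ℝ → ℝ) s = max (b - c) 0 := by
  rw [setIntegral_indicator measurableSet_Ioi, Ioc_inter_Ioi, sup_eq_right.mpr hac]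
  simp [measureReal_def, Real.volume_Ioc, ENNReal.toReal_ofReal']

theorem IsUpperSet.eq_Ioi_csInf {α : Type*} [ConditionallyCompleteLinearOrder α]
    [TopologicalSpace α] [OrderTopology α] [DenselyOrdered α] [NoMinOrder α] {s : Set α}
    (hs : IsUpperSet s) (ho : IsOpen s) (hne : s.Nonempty) (hbdd : BddBelow s) :
    s = Ioi (sInf s) := by
  ext x
  refine ⟨fun hx => ?_, fun hx => ?_⟩
  · obtain ⟨y, hys, hyx⟩ :=
      ((eventually_nhdsWithin_of_eventually_nhds (ho.mem_nhds hx)).and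
        (self_mem_nhdsWithin (s := Iio x))).exists
    exact (csInf_le hbdd hys).trans_lt hyx
  · obtain ⟨y, hys, hyx⟩ := exists_lt_of_csInf_lt hne hx
    exact hs hyx.le hys

def IsHeavisideSolution (u : IPath ℝ) : Prop :=
  ∀ t : ℝ≥0, u t = ∫ s in Ioc (0 : ℝ) (t : ℝ), Hside (u (Real.toNNReal s))

theorem isHeavisideSolution_of_eq_zero {u : IPath ℝ} (h : ∀ t, u t = 0) :
    IsHeavisideSolution u := fun t => by
  simp [h, Hside]

theorem isHeavisideSolution_of_eq_max_sub {u : IPath ℝ} (c : ℝ≥0)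
    (h : ∀ t : ℝ≥0, u t = max ((t : ℝ) - c) 0) : IsHeavisideSolution u := by
  have h_real : ∀ s : ℝ, u s.toNNReal = max (s - c) 0 := by
    intro s
    rcases le_total 0 s with hs | hs
    · rw [h, Real.coe_toNNReal _ hs]
    · simp [h, Real.toNNReal_of_nonpos hs, hs.trans c.coe_nonneg]
  intro t
  simp_rw [h_real, Hside_max_sub_zero]
  rw [h, setIntegral_Ioc_indicator_Ioi_one c.coe_nonneg]

namespace IsHeavisideSolution

theorem map_zero {u : IPath ℝ} (hu : IsHeavisideSolution u) : u 0 = 0 := by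
  simpa using hu 0

theorem monotone {u : IPath ℝ} (hu : IsHeavisideSolution u) : Monotone u := by
  intro t₁ t₂ h
  rw [hu t₁, hu t₂]
  exact setIntegral_mono_set
    (integrableOn_Hside_comp (u.continuous.comp continuous_real_toNNReal).measurable
      measure_Ioc_lt_top.ne)
    (.of_forall fun s => Hside_nonneg _)
    (Ioc_subset_Ioc_right (by exact_mod_cast h)).eventuallyLE

theorem positiveSet_eq_empty_or_Ioi {u : IPath ℝ} (hu : IsHeavisideSolution u) :
    {s : ℝ | 0 < u s.toNNReal} = ∅ ∨ ∃ c : ℝ≥0, {s : ℝ | 0 < u s.toNNReal} = Ioi (c : ℝ) := by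
  set S := {s : ℝ | 0 < u s.toNNReal}
  have hupper : IsUpperSet S := fun a b hab ha =>
    ha.trans_le (hu.monotone (Real.toNNReal_mono hab))
  have hopen : IsOpen S :=
    isOpen_Ioi.preimage (u.continuous.comp continuous_real_toNNReal)
  have hpos : ∀ s ∈ S, 0 ≤ s := fun s hs => by
    by_contra! hneg
    simp [S, Real.toNNReal_of_nonpos hneg.le, hu.map_zero] at hs
  rcases S.eq_empty_or_nonempty with hempty | hne
  · exact .inl hempty
  · exact .inr ⟨⟨sInf S, le_csInf hne hpos⟩, hupper.eq_Ioi_csInf hopen hne ⟨0, hpos⟩⟩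

theorem eq_zero_or_eq_max_sub {u : IPath ℝ} (hu : IsHeavisideSolution u) :
    (∀ t : ℝ≥0, u t = 0) ∨ ∃ c : ℝ≥0, ∀ t : ℝ≥0, u t = max ((t : ℝ) - c) 0 := by
  rcases hu.positiveSet_eq_empty_or_Ioi with hS | ⟨c, hS⟩
  · refine .inl fun t => ?_
    rw [hu t, Hside_comp fun s : ℝ => u s.toNNReal, hS]
    simp
  · refine .inr ⟨c, fun t => ?_⟩
    rw [hu t, Hside_comp fun s : ℝ => u s.toNNReal, hS,
      setIntegral_Ioc_indicator_Ioi_one c.coe_nonneg]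

end IsHeavisideSolution

/-- **The integral funnel of `du/dt = H(u)`, `u(0) = 0`.**  The set of continuous
`u : [0,∞) → ℝ` with `u(t) = ∫₀^t H(u(s)) ds` for all `t ≥ 0` is exactly the family
`{v_c : c ∈ [0,∞]}`, where `v_c(t) = max(t − c, 0)` for `c ∈ [0,∞)` and
`v_∞(t) = 0` for all `t`. -/
theorem heaviside_funnel :
    {u : IPath ℝ | ∀ t : ℝ≥0,
        u t = ∫ s in Ioc (0 : ℝ) (t : ℝ), Hside (u (Real.toNNReal s))} =
    {u : IPath ℝ | (∀ t : ℝ≥0, u t = 0) ∨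
        ∃ c : ℝ≥0, ∀ t : ℝ≥0, u t = max ((t : ℝ) - (c : ℝ)) 0} := by
  ext u
  refine ⟨IsHeavisideSolution.eq_zero_or_eq_max_sub, ?_⟩
  rintro (h | ⟨c, h⟩)
  · exact isHeavisideSolution_of_eq_zero h
  · exact isHeavisideSolution_of_eq_max_sub c h
end
end
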